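/- arXiv:1901.10043 — 8 statements merged into one kernel-verified Lean document; each statement's English description precedes it below -/
import Mathlib

section
/- Let (R, 𝔪) be a regular local ring of Krull dimension 2. Every nonempty totally ordered convex subset S of 𝒱 has an upper bound in 𝒱: there exists ν' ∈ 𝒱 such that μ ≤ ν' for every μ ∈ S. -/
open IsLocalRing

/-- A centered valuation on a local ring `(R, 𝔪)`: a function `ν : R → ℝ ∪ {∞}`
(modelled as `EReal`, with all values `≥ 0`, hence never `⊥`) satisfying
`ν(fg) = ν f + ν g`, `ν(f+g) ≥ min (ν f) (ν g)`, `ν 1 = 0`, `ν f ≥ 0` for all `f`,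
`ν f > 0` for `f ∈ 𝔪`, and `ν f < ∞` for some `f ∈ 𝔪`. -/
structure CenteredValn (R : Type*) [CommRing R] [IsLocalRing R] where
  v : R → EReal
  map_mul : ∀ f g : R, v (f * g) = v f + v g
  add_ge : ∀ f g : R, min (v f) (v g) ≤ v (f + g)
  map_one : v 1 = 0
  nonneg : ∀ f : R, 0 ≤ v f
  pos : ∀ f : R, f ∈ maximalIdeal R → 0 < v f
  proper : ∃ f : R, f ∈ maximalIdeal R ∧ v f ≠ ⊤

/-- A centered valuation is normalized if `inf {ν f : f ∈ 𝔪} = 1`. -/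
def CenteredValn.Normalized {R : Type*} [CommRing R] [IsLocalRing R]
    (ν : CenteredValn R) : Prop :=
  sInf {x : EReal | ∃ f ∈ maximalIdeal R, ν.v f = x} = 1

/-- The multiplicity function `f ↦ sup {i ∈ ℕ : f ∈ 𝔪^i}` (so `0 ↦ ∞`). -/
noncomputable def multVal (R : Type*) [CommRing R] [IsLocalRing R] (f : R) : EReal :=
  sSup {x : EReal | ∃ i : ℕ, f ∈ maximalIdeal R ^ i ∧ x = (i : EReal)}

/-- A normalized valuation takes values `≥ 1` on the maximal ideal. -/
lemma CenteredValn.one_le_of_normalized {R : Type*} [CommRing R] [IsLocalRing R]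
    {ν : CenteredValn R} (h : ν.Normalized) {f : R} (hf : f ∈ maximalIdeal R) :
    1 ≤ ν.v f := by
  rw [← h]; exact sInf_le ⟨f, hf, rfl⟩

/-- If `𝔪 = (x, y)`, a normalized valuation has `min (ν x) (ν y) = 1`. -/
lemma min_eq_one_of_span_pair {R : Type*} [CommRing R] [IsLocalRing R] {x y : R}
    (hxy : maximalIdeal R = Ideal.span {x, y}) {ν : CenteredValn R} (h : ν.Normalized) :
    min (ν.v x) (ν.v y) = 1 := by
  have hx : x ∈ maximalIdeal R := by
    rw [hxy]; exact Ideal.subset_span (by simp)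
  have hy : y ∈ maximalIdeal R := by
    rw [hxy]; exact Ideal.subset_span (by simp)
  refine le_antisymm ?_ (le_min (ν.one_le_of_normalized h hx) (ν.one_le_of_normalized h hy))
  rw [← h]
  refine le_sInf ?_
  rintro z ⟨f, hf, rfl⟩
  rw [hxy, Ideal.mem_span_pair] at hf
  obtain ⟨a, b, rfl⟩ := hf
  refine le_trans ?_ (ν.add_ge _ _)
  refine le_min ?_ ?_
  · refine le_trans (min_le_left _ _) ?_
    rw [ν.map_mul]
    calc ν.v x = 0 + ν.v x := by rw [zero_add]
    _ ≤ ν.v a + ν.v x := by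
        exact add_le_add_left (ν.nonneg a) _
  · refine le_trans (min_le_right _ _) ?_
    rw [ν.map_mul]
    calc ν.v y = 0 + ν.v y := by rw [zero_add]
    _ ≤ ν.v b + ν.v y := by
        exact add_le_add_left (ν.nonneg b) _

/-- Let `(R, 𝔪)` be a regular local ring of Krull dimension 2.
Every nonempty totally ordered convex subset `S` of `𝒱` has an upper bound in `𝒱`. -/
theorem chain_has_upper_bound
    (R : Type*) [CommRing R] [IsDomain R] [IsNoetherianRing R] [IsLocalRing R]
    (hdim : ringKrullDim R = 2)
    (hreg : ∃ x y : R, maximalIdeal R = Ideal.span {x, y})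
    (S : Set (CenteredValn R))
    (hSnorm : ∀ ν ∈ S, ν.Normalized)
    (hSne : S.Nonempty)
    (hStotal : ∀ μ ∈ S, ∀ ν ∈ S, (∀ f : R, μ.v f ≤ ν.v f) ∨ (∀ f : R, ν.v f ≤ μ.v f))
    (hSconvex : ∀ μ ∈ S, ∀ ν ∈ S, ∀ ρ : CenteredValn R, ρ.Normalized →
      (∀ f : R, μ.v f ≤ ρ.v f) → (∀ f : R, ρ.v f ≤ ν.v f) → ρ ∈ S) :
    ∃ ν' : CenteredValn R, ν'.Normalized ∧ ∀ μ ∈ S, ∀ f : R, μ.v f ≤ ν'.v f := by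
  classical
  obtain ⟨x, y, hxy⟩ := hreg
  have hx : x ∈ maximalIdeal R := by rw [hxy]; exact Ideal.subset_span (by simp)
  have hy : y ∈ maximalIdeal R := by rw [hxy]; exact Ideal.subset_span (by simp)
  haveI : Nonempty S := hSne.to_subtype
  -- directedness
  have hdir : ∀ μ ν : S, ∃ ρ : S, (∀ f, (μ : CenteredValn R).v f ≤ (ρ : CenteredValn R).v f)
      ∧ (∀ f, (ν : CenteredValn R).v f ≤ (ρ : CenteredValn R).v f) := by
    rintro ⟨μ, hμ⟩ ⟨ν, hν⟩
    rcases hStotal μ hμ ν hν with h | h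
    · exact ⟨⟨ν, hν⟩, h, fun f => le_refl _⟩
    · exact ⟨⟨μ, hμ⟩, fun f => le_refl _, h⟩
  set W : R → EReal := fun f => ⨆ μ : S, (μ : CenteredValn R).v f with hW
  have hle : ∀ (μ : S) (f : R), (μ : CenteredValn R).v f ≤ W f :=
    fun μ f => le_iSup (fun μ : S => (μ : CenteredValn R).v f) μ
  have hWnonneg : ∀ f, 0 ≤ W f := fun f => le_trans ((Classical.arbitrary S).1.nonneg f)
    (hle _ f)
  have hmul : ∀ f g : R, W (f * g) = W f + W g := by
    intro f g
    refine le_antisymm (iSup_le fun μ => ?_) ?_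
    · rw [(μ : CenteredValn R).map_mul]
      exact add_le_add (hle μ f) (hle μ g)
    · refine EReal.add_le_of_forall_lt fun a ha b hb => ?_
      obtain ⟨μ, hμ⟩ := lt_iSup_iff.mp ha
      obtain ⟨ν, hν⟩ := lt_iSup_iff.mp hb
      obtain ⟨ρ, hρ1, hρ2⟩ := hdir μ ν
      refine le_trans (EReal.add_lt_add (lt_of_lt_of_le hμ (hρ1 f))
        (lt_of_lt_of_le hν (hρ2 g))).le ?_
      rw [← (ρ : CenteredValn R).map_mul]
      exact hle ρ _
  have hadd : ∀ f g : R, min (W f) (W g) ≤ W (f + g) := by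
    intro f g
    refine le_of_forall_lt fun c hc => ?_
    rw [lt_min_iff] at hc
    obtain ⟨μ, hμ⟩ := lt_iSup_iff.mp hc.1
    obtain ⟨ν, hν⟩ := lt_iSup_iff.mp hc.2
    obtain ⟨ρ, hρ1, hρ2⟩ := hdir μ ν
    have : c < min ((ρ : CenteredValn R).v f) ((ρ : CenteredValn R).v g) :=
      lt_min (lt_of_lt_of_le hμ (hρ1 f)) (lt_of_lt_of_le hν (hρ2 g))
    exact lt_of_lt_of_le this (le_trans ((ρ : CenteredValn R).add_ge f g) (hle ρ _))
  have hone : W 1 = 0 := by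
    refine le_antisymm (iSup_le fun μ => by rw [(μ : CenteredValn R).map_one]) ?_
    exact le_trans (by rw [(Classical.arbitrary S).1.map_one]) (hle (Classical.arbitrary S) 1)
  have hpos : ∀ f ∈ maximalIdeal R, 0 < W f := fun f hf =>
    lt_of_lt_of_le ((Classical.arbitrary S).1.pos f hf) (hle _ f)
  -- key: W x = 1 or W y = 1
  have hone_ge : ∀ f ∈ maximalIdeal R, 1 ≤ W f := by
    intro f hf
    exact le_trans ((Classical.arbitrary S).1.one_le_of_normalized
      (hSnorm _ (Classical.arbitrary S).2) hf) (hle _ f)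
  have hkey : W x = 1 ∨ W y = 1 := by
    by_contra hcon
    push_neg at hcon
    have hWx : 1 < W x := lt_of_le_of_ne (hone_ge x hx) (Ne.symm hcon.1)
    have hWy : 1 < W y := lt_of_le_of_ne (hone_ge y hy) (Ne.symm hcon.2)
    obtain ⟨μ, hμ⟩ := lt_iSup_iff.mp hWx
    obtain ⟨ν, hν⟩ := lt_iSup_iff.mp hWy
    obtain ⟨ρ, hρ1, hρ2⟩ := hdir μ ν
    have h1 : 1 < (ρ : CenteredValn R).v x := lt_of_lt_of_le hμ (hρ1 x)
    have h2 : 1 < (ρ : CenteredValn R).v y := lt_of_lt_of_le hν (hρ2 y)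
    have := min_eq_one_of_span_pair hxy (hSnorm _ ρ.2)
    rw [min_def] at this
    split_ifs at this <;> simp_all only [lt_self_iff_false]
  have hWnorm : sInf {z : EReal | ∃ f ∈ maximalIdeal R, W f = z} = 1 := by
    refine le_antisymm ?_ (le_sInf ?_)
    · rcases hkey with h | h
      · exact sInf_le ⟨x, hx, h⟩
      · exact sInf_le ⟨y, hy, h⟩
    · rintro z ⟨f, hf, rfl⟩
      exact hone_ge f hf
  refine ⟨⟨W, hmul, hadd, hone, hWnonneg, hpos, ?_⟩, hWnorm, fun μ hμ f => hle ⟨μ, hμ⟩ f⟩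
  rcases hkey with h | h
  · exact ⟨x, hx, by rw [h, ← EReal.coe_one]; exact EReal.coe_ne_top 1⟩
  · exact ⟨y, hy, by rw [h, ← EReal.coe_one]; exact EReal.coe_ne_top 1⟩
end

section
/- Let K be a field and let μ < ν be valuations on K[y] such that the set of strictly positive values taken by μ is well-ordered and μ(y) ≥ 0. Then every β ∈ Ψ_μ(ν) satisfies β ≥ d_μ(ν)·μ(y) ≥ 0; every element of Ψ_μ(ν) that is not a greatest element of Ψ_μ(ν) belongs to the value group Γ_μ of μ; consequently Ψ_μ(ν) is a nonempty well-ordered subset of ℝ ∪ {∞} and has a least element β_μ(ν). -/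
open Polynomial

/-- A valuation on the polynomial ring `K[y]`: a function `ν : K[y] → ℝ ∪ {∞}`
(modelled as `EReal`, never taking the value `⊥ = -∞`) with `ν(fg) = ν f + ν g`,
`ν(f+g) ≥ min (ν f) (ν g)`, `ν 1 = 0` and `ν 0 = ∞`. -/
structure PolyValuation (K : Type*) [Field K] where
  v : Polynomial K → EReal
  ne_bot : ∀ f : Polynomial K, v f ≠ ⊥
  map_mul : ∀ f g : Polynomial K, v (f * g) = v f + v g
  add_ge : ∀ f g : Polynomial K, min (v f) (v g) ≤ v (f + g)
  map_one : v 1 = 0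
  map_zero : v 0 = ⊤

variable {K : Type*} [Field K]

/-- `ε_ν(P) := sup_{b ≥ 1} (ν(P) − ν(∂_b P))/b`, where `∂_b` is the `b`-th Hasse
derivative with respect to `y`; computed in `ℝ ∪ {±∞}`. -/
noncomputable def eps (ν : PolyValuation K) (P : Polynomial K) : EReal :=
  ⨆ b ∈ {b : ℕ | 1 ≤ b}, (ν.v P - ν.v (Polynomial.hasseDeriv b P)) / (b : EReal)

/-- A key polynomial for `ν`: a monic polynomial `Q` with `ν(Q) ≥ ν(y)` such that
every `f` with `ε_ν(f) ≥ ε_ν(Q)` satisfies `deg f ≥ deg Q`. -/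
def IsKeyPoly (ν : PolyValuation K) (Q : Polynomial K) : Prop :=
  Q.Monic ∧ ν.v Polynomial.X ≤ ν.v Q ∧
    ∀ f : Polynomial K, eps ν Q ≤ eps ν f → Q.natDegree ≤ f.natDegree

/-- `w` is the truncation `ν_Q` of `ν` with respect to the monic polynomial `Q`:
whenever `g = Σ_{j=0}^{s} c_j Q^j` is a `Q`-expansion (all `deg c_j < deg Q`),
`w g = min_j ν(c_j Q^j)`. -/
def IsTruncation (ν : PolyValuation K) (Q : Polynomial K)
    (w : Polynomial K → EReal) : Prop :=
  ∀ (g : Polynomial K) (s : ℕ) (c : ℕ → Polynomial K),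
    (∀ j ≤ s, (c j).degree < Q.degree) →
    g = ∑ j ∈ Finset.range (s + 1), c j * Q ^ j →
    w g = Finset.inf (Finset.range (s + 1)) (fun j => ν.v (c j * Q ^ j))

/-- The value group of `w`: the subgroup of `(ℝ, +)` generated by the finite values
`w f`, `f ≠ 0`. -/
def valueGroup (w : Polynomial K → EReal) : AddSubgroup ℝ :=
  AddSubgroup.closure {x : ℝ | ∃ f : Polynomial K, f ≠ 0 ∧ w f = (x : EReal)}

/-- The set of strictly positive values taken by `μ` is well-ordered. -/
def PosValuesWF (μ : PolyValuation K) : Prop :=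
  {x : EReal | 0 < x ∧ ∃ f : Polynomial K, μ.v f = x}.IsWF

/-- `d_μ(ν)`: the minimal degree of a monic polynomial `f` with `μ(f) < ν(f)`. -/
noncomputable def dmn (μ ν : PolyValuation K) : ℕ :=
  sInf {n : ℕ | ∃ f : Polynomial K, f.Monic ∧ f.natDegree = n ∧ μ.v f < ν.v f}

/-- `Φ_μ(ν)`: monic polynomials of degree `d_μ(ν)` with `μ(Q) < ν(Q)`. -/
def Phi (μ ν : PolyValuation K) : Set (Polynomial K) :=
  {Q : Polynomial K | Q.Monic ∧ Q.natDegree = dmn μ ν ∧ μ.v Q < ν.v Q}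

/-- `Ψ_μ(ν) = ν(Φ_μ(ν))`. -/
def Psi (μ ν : PolyValuation K) : Set EReal :=
  (fun Q => ν.v Q) '' Phi μ ν

/-- `β_μ(ν)`: the least element of `Ψ_μ(ν)`. -/
noncomputable def betaMN (μ ν : PolyValuation K) : EReal :=
  sInf (Psi μ ν)

section AuxLemmas

variable (μ ν : PolyValuation K)

lemma PV.v_pow (f : Polynomial K) (n : ℕ) : μ.v (f ^ n) = n • μ.v f := by
  induction n with
  | zero => simpa using μ.map_one
  | succ n ih => rw [pow_succ, μ.map_mul, ih, succ_nsmul]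

lemma PV.v_C_real {c : K} (hc : c ≠ 0) : ∃ r : ℝ, μ.v (Polynomial.C c) = (r : EReal) := by
  have h : μ.v (Polynomial.C c) + μ.v (Polynomial.C c⁻¹) = 0 := by
    rw [← μ.map_mul, ← Polynomial.C_mul, mul_inv_cancel₀ hc, Polynomial.C_1, μ.map_one]
  have htop : μ.v (Polynomial.C c) ≠ ⊤ := by
    intro h'
    rw [h', EReal.top_add_of_ne_bot (μ.ne_bot _)] at h
    exact (by simp : (⊤ : EReal) ≠ 0) h
  exact ⟨(μ.v (Polynomial.C c)).toReal, (EReal.coe_toReal htop (μ.ne_bot _)).symm⟩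

lemma PV.v_neg (f : Polynomial K) : μ.v (-f) = μ.v f := by
  have h1 : μ.v (Polynomial.C (-1 : K)) + μ.v (Polynomial.C (-1 : K)) = 0 := by
    rw [← μ.map_mul, ← Polynomial.C_mul, neg_mul_neg, one_mul, Polynomial.C_1, μ.map_one]
  obtain ⟨r, hr⟩ := PV.v_C_real μ (by simp : (-1 : K) ≠ 0)
  have hr0 : r = 0 := by
    rw [hr, ← EReal.coe_add] at h1
    have : r + r = 0 := by exact_mod_cast h1
    linarith
  have h2 : μ.v (-f) = μ.v (Polynomial.C (-1 : K) * f) := by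
    congr 1
    rw [show (Polynomial.C (-1 : K)) = (-1 : Polynomial K) by simp, neg_one_mul]
  rw [h2, μ.map_mul, hr, hr0]
  simp

lemma PV.min_le_v_sub (f g : Polynomial K) :
    min (μ.v f) (μ.v g) ≤ μ.v (f - g) := by
  have := μ.add_ge f (-g)
  rwa [PV.v_neg, ← sub_eq_add_neg] at this

variable {μ ν} (hle : ∀ f : Polynomial K, μ.v f ≤ ν.v f)
include hle

lemma PV.v_C_eq {c : K} (hc : c ≠ 0) : μ.v (Polynomial.C c) = ν.v (Polynomial.C c) := by
  obtain ⟨a, ha⟩ := PV.v_C_real μ hc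
  obtain ⟨b, hb⟩ := PV.v_C_real μ (inv_ne_zero hc)
  obtain ⟨a', ha'⟩ := PV.v_C_real ν hc
  obtain ⟨b', hb'⟩ := PV.v_C_real ν (inv_ne_zero hc)
  have h : μ.v (Polynomial.C c) + μ.v (Polynomial.C c⁻¹) = 0 := by
    rw [← μ.map_mul, ← Polynomial.C_mul, mul_inv_cancel₀ hc, Polynomial.C_1, μ.map_one]
  have h' : ν.v (Polynomial.C c) + ν.v (Polynomial.C c⁻¹) = 0 := by
    rw [← ν.map_mul, ← Polynomial.C_mul, mul_inv_cancel₀ hc, Polynomial.C_1, ν.map_one]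
  rw [ha, hb, ← EReal.coe_add] at h
  rw [ha', hb', ← EReal.coe_add] at h'
  have hab : a + b = 0 := by exact_mod_cast h
  have hab' : a' + b' = 0 := by exact_mod_cast h'
  have h1 : a ≤ a' := by have := hle (Polynomial.C c); rw [ha, ha'] at this; exact_mod_cast this
  have h2 : b ≤ b' := by
    have := hle (Polynomial.C c⁻¹); rw [hb, hb'] at this; exact_mod_cast this
  have : a = a' := by linarith
  rw [ha, ha', this]

lemma PV.exists_monic {f : Polynomial K} (hf : f ≠ 0) (hlt : μ.v f < ν.v f) :
    ∃ f₀ : Polynomial K, f₀.Monic ∧ f₀.natDegree = f.natDegree ∧ μ.v f₀ < ν.v f₀ := by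
  set c := f.leadingCoeff with hc
  have hc0 : c ≠ 0 := Polynomial.leadingCoeff_ne_zero.mpr hf
  set f₀ := f * Polynomial.C c⁻¹ with hf₀
  have hmon : f₀.Monic := Polynomial.monic_mul_leadingCoeff_inv hf
  have hdeg : f₀.degree = f.degree := Polynomial.degree_mul_leadingCoeff_inv f hf
  have hndeg : f₀.natDegree = f.natDegree := by
    unfold Polynomial.natDegree; rw [hdeg]
  have hfe : f = f₀ * Polynomial.C c := by
    rw [hf₀, mul_assoc, ← Polynomial.C_mul, inv_mul_cancel₀ hc0, Polynomial.C_1, mul_one]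
  refine ⟨f₀, hmon, hndeg, ?_⟩
  by_contra hcon
  push_neg at hcon
  have hμf : μ.v f = μ.v f₀ + μ.v (Polynomial.C c) := by rw [hfe, μ.map_mul]
  have hνf : ν.v f = ν.v f₀ + μ.v (Polynomial.C c) := by
    rw [hfe, ν.map_mul, PV.v_C_eq hle hc0]
  have : ν.v f ≤ μ.v f := by
    rw [hμf, hνf]
    exact add_le_add_left hcon _
  exact absurd hlt (not_lt.mpr this)

lemma PV.eq_of_natDegree_lt {f : Polynomial K} (hf : f ≠ 0)
    (hdeg : f.natDegree < dmn μ ν) : μ.v f = ν.v f := by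
  by_contra h
  have hlt : μ.v f < ν.v f := lt_of_le_of_ne (hle f) h
  obtain ⟨f₀, hmon, hndeg, hlt₀⟩ := PV.exists_monic hle hf hlt
  have : dmn μ ν ≤ f.natDegree :=
    Nat.sInf_le ⟨f₀, hmon, hndeg, hlt₀⟩
  omega

end AuxLemmas

/-- Let `μ < ν` be valuations on `K[y]` with the strictly positive
values of `μ` well-ordered and `μ(y) ≥ 0`.  Then every `β ∈ Ψ_μ(ν)` satisfies
`β ≥ d_μ(ν)·μ(y) ≥ 0`; every element of `Ψ_μ(ν)` that is not a greatest element of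
`Ψ_μ(ν)` lies in the value group `Γ_μ`; and `Ψ_μ(ν)` is a nonempty well-ordered
subset of `ℝ ∪ {∞}` with a least element. -/
theorem Psi_well_ordered_with_least_element
    (μ ν : PolyValuation K)
    (hle : ∀ f : Polynomial K, μ.v f ≤ ν.v f) (hne : μ.v ≠ ν.v)
    (hwf : PosValuesWF μ) (hy : 0 ≤ μ.v Polynomial.X) :
    (∀ β ∈ Psi μ ν, 0 ≤ dmn μ ν • μ.v Polynomial.X ∧ dmn μ ν • μ.v Polynomial.X ≤ β) ∧
    (∀ β ∈ Psi μ ν, (∃ β' ∈ Psi μ ν, β < β') →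
      ∃ r : ℝ, β = (r : EReal) ∧ r ∈ valueGroup μ.v) ∧
    (Psi μ ν).Nonempty ∧ (Psi μ ν).IsWF ∧
    ∃ β₀ ∈ Psi μ ν, ∀ β ∈ Psi μ ν, β₀ ≤ β := by
  set d := dmn μ ν with hd
  -- the defining set of `dmn` is nonempty
  have hSne : {n : ℕ | ∃ f : Polynomial K, f.Monic ∧ f.natDegree = n ∧ μ.v f < ν.v f}.Nonempty := by
    obtain ⟨f, hf⟩ := Function.ne_iff.mp hne
    have hf0 : f ≠ 0 := by
      rintro rfl
      rw [μ.map_zero, ν.map_zero] at hf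
      exact hf rfl
    obtain ⟨f₀, hmon, hndeg, hlt₀⟩ := PV.exists_monic hle hf0 (lt_of_le_of_ne (hle f) hf)
    exact ⟨f.natDegree, f₀, hmon, hndeg, hlt₀⟩
  have hdmem : d ∈ {n : ℕ | ∃ f : Polynomial K, f.Monic ∧ f.natDegree = n ∧ μ.v f < ν.v f} :=
    Nat.sInf_mem hSne
  obtain ⟨Q0, hQ0mon, hQ0deg, hQ0lt⟩ := hdmem
  have hPsiNe : (Psi μ ν).Nonempty := ⟨ν.v Q0, Q0, ⟨hQ0mon, hQ0deg, hQ0lt⟩, rfl⟩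
  -- Part 1: lower bound
  have key1 : ∀ Q ∈ Phi μ ν, d • μ.v Polynomial.X ≤ ν.v Q := by
    rintro Q ⟨hmon, hdeg, hlt⟩
    by_contra hcon
    push_neg at hcon
    have hXd : μ.v (Polynomial.X ^ d : Polynomial K) = d • μ.v Polynomial.X :=
      PV.v_pow μ _ d
    have hμQ : μ.v Q < μ.v (Polynomial.X ^ d : Polynomial K) := by
      rw [hXd]; exact hlt.trans hcon
    set R := Q - Polynomial.X ^ d with hR
    rcases eq_or_ne R 0 with h0 | hR0
    · have : Q = Polynomial.X ^ d := sub_eq_zero.mp h0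
      rw [this] at hμQ
      exact lt_irrefl _ hμQ
    · have hQ0' : Q ≠ 0 := hmon.ne_zero
      have hdegQ : Q.degree = (d : WithBot ℕ) := by
        rw [Polynomial.degree_eq_natDegree hQ0', hdeg]
      have hdegRlt : R.degree < (d : WithBot ℕ) := by
        have := Polynomial.degree_sub_lt (p := Q) (q := Polynomial.X ^ d)
          (by rw [hdegQ, Polynomial.degree_X_pow]) hQ0'
          (by rw [hmon.leadingCoeff, Polynomial.leadingCoeff_X_pow])
        rwa [hdegQ] at this
      have hndegR : R.natDegree < d := by
        rwa [Polynomial.natDegree_lt_iff_degree_lt hR0]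
      -- μ(R) ≤ μ(Q)
      have hμR : μ.v R ≤ μ.v Q := by
        by_contra hcon2
        push_neg at hcon2
        have hmin : min (μ.v (Polynomial.X ^ d : Polynomial K)) (μ.v R) ≤ μ.v Q := by
          have := μ.add_ge (Polynomial.X ^ d) R
          rwa [show Polynomial.X ^ d + R = Q by rw [hR]; ring] at this
        exact absurd hmin (not_le.mpr (lt_min hμQ hcon2))
      -- μ(Q) < ν(R)
      have hνR : μ.v Q < ν.v R := by
        have hmin : min (ν.v Q) (ν.v (Polynomial.X ^ d : Polynomial K)) ≤ ν.v R :=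
          PV.min_le_v_sub ν Q (Polynomial.X ^ d)
        have h1 : μ.v Q < ν.v Q := hlt
        have h2 : μ.v Q < ν.v (Polynomial.X ^ d : Polynomial K) := by
          have : d • μ.v Polynomial.X ≤ d • ν.v Polynomial.X :=
            nsmul_le_nsmul_right (hle Polynomial.X) d
          calc μ.v Q < ν.v Q := hlt
            _ < d • μ.v Polynomial.X := hcon
            _ ≤ d • ν.v Polynomial.X := this
            _ = ν.v (Polynomial.X ^ d : Polynomial K) := (PV.v_pow ν _ d).symm
        exact lt_of_lt_of_le (lt_min h1 h2) hmin
      have heq : μ.v R = ν.v R := PV.eq_of_natDegree_lt hle hR0 hndegR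
      rw [heq] at hμR
      exact absurd hνR (not_lt.mpr hμR)
  have part1 : ∀ β ∈ Psi μ ν, 0 ≤ d • μ.v Polynomial.X ∧ d • μ.v Polynomial.X ≤ β := by
    rintro β ⟨Q, hQ, rfl⟩
    exact ⟨nsmul_nonneg hy d, key1 Q hQ⟩
  -- Part 2 core: every non-maximal element of Psi is a μ-value of a nonzero polynomial
  have key2 : ∀ β ∈ Psi μ ν, (∃ β' ∈ Psi μ ν, β < β') →
      ∃ f : Polynomial K, f ≠ 0 ∧ μ.v f = β ∧ β ≠ ⊤ := by
    rintro β ⟨Q, ⟨hmon, hdeg, hltQ⟩, rfl⟩ ⟨β', ⟨Q', ⟨hmon', hdeg', hltQ'⟩, rfl⟩, hlt⟩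
    have hQne : Q' ≠ Q := by
      rintro rfl
      exact lt_irrefl _ hlt
    set f := Q' - Q with hf
    have hf0 : f ≠ 0 := sub_ne_zero.mpr hQne
    have hdegQ : Q.degree = (d : WithBot ℕ) := by
      rw [Polynomial.degree_eq_natDegree hmon.ne_zero, hdeg]
    have hdegQ' : Q'.degree = (d : WithBot ℕ) := by
      rw [Polynomial.degree_eq_natDegree hmon'.ne_zero, hdeg']
    have hdegf : f.natDegree < d := by
      rw [Polynomial.natDegree_lt_iff_degree_lt hf0]
      have := Polynomial.degree_sub_lt (p := Q') (q := Q)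
        (by rw [hdegQ, hdegQ']) hmon'.ne_zero
        (by rw [hmon.leadingCoeff, hmon'.leadingCoeff])
      rwa [hdegQ'] at this
    -- ν f = ν Q
    have h1 : ν.v Q ≤ ν.v f := by
      have hmin : min (ν.v Q') (ν.v Q) ≤ ν.v f := PV.min_le_v_sub ν Q' Q
      rwa [min_eq_right hlt.le] at hmin
    have h2 : ν.v f ≤ ν.v Q := by
      by_contra hcon
      push_neg at hcon
      have hmin : min (ν.v Q') (ν.v f) ≤ ν.v Q := by
        have := PV.min_le_v_sub ν Q' f
        rwa [show Q' - f = Q by rw [hf]; ring] at this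
      exact absurd hmin (not_le.mpr (lt_min hlt hcon))
    have hνf : ν.v f = ν.v Q := le_antisymm h2 h1
    have hμf : μ.v f = ν.v Q := by
      rw [← hνf]; exact PV.eq_of_natDegree_lt hle hf0 hdegf
    exact ⟨f, hf0, hμf, ne_top_of_lt hlt⟩
  have part2 : ∀ β ∈ Psi μ ν, (∃ β' ∈ Psi μ ν, β < β') →
      ∃ r : ℝ, β = (r : EReal) ∧ r ∈ valueGroup μ.v := by
    intro β hβ hmax
    obtain ⟨f, hf0, hμf, hβtop⟩ := key2 β hβ hmax
    have hβbot : β ≠ ⊥ := by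
      rw [← hμf]; exact μ.ne_bot f
    refine ⟨β.toReal, (EReal.coe_toReal hβtop hβbot).symm, ?_⟩
    exact AddSubgroup.subset_closure ⟨f, hf0, by rw [hμf, EReal.coe_toReal hβtop hβbot]⟩
  -- Part 3: well-foundedness
  have hPsiWF : (Psi μ ν).IsWF := by
    rw [Set.isWF_iff_no_descending_seq]
    intro g hg hmem
    have hmem' : ∀ n : ℕ, g n ∈ Psi μ ν := fun n => hmem n
    have hpos : ∀ n : ℕ, 0 < g (n + 1) := by
      intro n
      have h1 : (0 : EReal) ≤ g (n + 2) :=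
        le_trans (part1 _ (hmem' (n + 2))).1 (part1 _ (hmem' (n + 2))).2
      exact lt_of_le_of_lt h1 (hg (by omega : n + 1 < n + 2))
    have hval : ∀ n : ℕ, ∃ f : Polynomial K, μ.v f = g (n + 1) := by
      intro n
      obtain ⟨f, _, hμf, _⟩ := key2 (g (n + 1)) (hmem' (n + 1))
        ⟨g n, hmem' n, hg (by omega : n < n + 1)⟩
      exact ⟨f, hμf⟩
    have hanti : StrictAnti (fun n : ℕ => g (n + 1)) := fun a b hab => hg (by omega)
    exact Set.isWF_iff_no_descending_seq.mp hwf (fun n => g (n + 1)) hanti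
      (fun n => ⟨hpos n, hval n⟩)
  refine ⟨part1, part2, hPsiNe, hPsiWF, hPsiWF.min hPsiNe, hPsiWF.min_mem hPsiNe,
    fun β hβ => hPsiWF.min_le hPsiNe hβ⟩
end

section
/- Let K be a field and let μ < ν be valuations on K[y] such that the set of strictly positive values taken by μ is well-ordered. If Q, Q' ∈ Φ_μ(ν) satisfy ν(Q) = ν(Q') = β_μ(ν), then the truncations of ν with respect to Q and to Q' coincide: ν_Q(f) = ν_{Q'}(f) for every f ∈ K[y]. -/
open Polynomial

variable {K : Type*} [Field K]

namespace PV


lemma ereal_exists_real {x : EReal} (h1 : x ≠ ⊥) (h2 : x ≠ ⊤) : ∃ r : ℝ, x = (r : EReal) := by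
  induction x using EReal.rec with
  | bot => exact absurd rfl h1
  | coe r => exact ⟨r, rfl⟩
  | top => exact absurd rfl h2

variable (ξ : PolyValuation K)

lemma add_self_eq_zero {x : EReal} (hb : x ≠ ⊥) (h : x + x = 0) : x = 0 := by
  induction x using EReal.rec with
  | bot => exact absurd rfl hb
  | coe r =>
      norm_cast at h ⊢
      linarith
  | top => simp at h

lemma v_neg_one : ξ.v (-1) = 0 := by
  have e : ((-1 : Polynomial K) * (-1)) = 1 := by ring
  have h : ξ.v (-1) + ξ.v (-1) = 0 := by
    rw [← ξ.map_mul, e, ξ.map_one]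
  exact add_self_eq_zero (ξ.ne_bot _) h

lemma v_neg_s11 (f : Polynomial K) : ξ.v (-f) = ξ.v f := by
  have : -f = -1 * f := by ring
  rw [this, ξ.map_mul, v_neg_one, zero_add]

lemma v_add_eq {f g : Polynomial K} (h : ξ.v f < ξ.v g) : ξ.v (f + g) = ξ.v f := by
  refine le_antisymm ?_ ?_
  · by_contra hc
    push_neg at hc
    have e : (f + g) + (-g) = f := by ring
    have h3 : min (ξ.v (f + g)) (ξ.v g) ≤ ξ.v f := by
      calc min (ξ.v (f + g)) (ξ.v g) = min (ξ.v (f + g)) (ξ.v (-g)) := by rw [v_neg_s11]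
        _ ≤ ξ.v ((f + g) + (-g)) := ξ.add_ge _ _
        _ = ξ.v f := by rw [e]
    exact absurd (lt_of_lt_of_le (lt_min hc h) h3) (lt_irrefl _)
  · exact le_trans (le_min (le_refl _) h.le) (ξ.add_ge f g)

lemma v_add_eq' {f g : Polynomial K} (h : ξ.v g < ξ.v f) : ξ.v (f + g) = ξ.v g := by
  rw [add_comm]; exact v_add_eq ξ h

lemma v_sum (n : ℕ) (g : ℕ → Polynomial K) :
    (Finset.range n).inf (fun j => ξ.v (g j)) ≤ ξ.v (∑ j ∈ Finset.range n, g j) := by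
  induction n with
  | zero => simp [ξ.map_zero]
  | succ n ih =>
    rw [Finset.sum_range_succ]
    refine le_trans (le_min ?_ ?_) (ξ.add_ge _ _)
    · exact le_trans (Finset.inf_mono (Finset.range_subset_range.2 (Nat.le_succ n))) ih
    · exact Finset.inf_le (Finset.self_mem_range_succ n)

lemma v_natCast (m : ℕ) : (0 : EReal) ≤ ξ.v (m : Polynomial K) := by
  induction m with
  | zero => simp [ξ.map_zero]
  | succ m ih =>
    push_cast
    refine le_trans (le_min ih (le_of_eq ξ.map_one.symm)) (ξ.add_ge _ _)

lemma v_pow_le {a b : Polynomial K} (h : ξ.v a ≤ ξ.v b) (n : ℕ) :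
    ξ.v (a ^ n) ≤ ξ.v (b ^ n) := by
  induction n with
  | zero => simp
  | succ n ih =>
    rw [pow_succ, pow_succ, ξ.map_mul, ξ.map_mul]
    exact add_le_add ih h

lemma v_pow_congr {a b : Polynomial K} (h : ξ.v a = ξ.v b) (n : ℕ) :
    ξ.v (a ^ n) = ξ.v (b ^ n) :=
  le_antisymm (v_pow_le ξ h.le n) (v_pow_le ξ h.ge n)



noncomputable def digits (Q : Polynomial K) : ℕ → Polynomial K → Polynomial K
  | 0, f => f %ₘ Q
  | j + 1, f => digits Q j (f /ₘ Q)

lemma digits_zero (Q : Polynomial K) : ∀ j, digits Q j 0 = 0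
  | 0 => zero_modByMonic Q
  | j + 1 => by
      show digits Q j (0 /ₘ Q) = 0
      rw [zero_divByMonic]
      exact digits_zero Q j

lemma digits_degree_lt {Q : Polynomial K} (hQ : Q.Monic) :
    ∀ (j : ℕ) (f : Polynomial K), (digits Q j f).degree < Q.degree
  | 0, f => degree_modByMonic_lt f hQ
  | j + 1, f => digits_degree_lt hQ j (f /ₘ Q)

lemma digits_sum {Q : Polynomial K} (hQ : Q.Monic) (hd : 1 ≤ Q.natDegree) :
    ∀ (s : ℕ) (f : Polynomial K), f.natDegree < Q.natDegree * (s + 1) →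
      ∑ j ∈ Finset.range (s + 1), digits Q j f * Q ^ j = f := by
  intro s
  induction s with
  | zero =>
    intro f hf
    have hdeg : f.degree < Q.degree := degree_lt_degree (by simpa using hf)
    rw [Finset.sum_range_one, pow_zero, mul_one]
    exact (modByMonic_eq_self_iff hQ).2 hdeg
  | succ s ih =>
    intro f hf
    have hdiv : (f /ₘ Q).natDegree < Q.natDegree * (s + 1) := by
      rw [natDegree_divByMonic f hQ]
      have h1 : Q.natDegree * (s + 1 + 1) = Q.natDegree * (s + 1) + Q.natDegree := by ring
      rw [h1] at hf
      have h2 : Q.natDegree ≤ Q.natDegree * (s + 1) := Nat.le_mul_of_pos_right _ (by omega)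
      omega
    have key := ih (f /ₘ Q) hdiv
    rw [Finset.sum_range_succ' (fun j => digits Q j f * Q ^ j) (s + 1)]
    have e1 : ∀ j, digits Q (j + 1) f * Q ^ (j + 1) = (digits Q j (f /ₘ Q) * Q ^ j) * Q := by
      intro j
      show digits Q j (f /ₘ Q) * Q ^ (j + 1) = _
      rw [pow_succ]; ring
    calc (∑ j ∈ Finset.range (s + 1), digits Q (j + 1) f * Q ^ (j + 1)) + digits Q 0 f * Q ^ 0
        = (∑ j ∈ Finset.range (s + 1), digits Q j (f /ₘ Q) * Q ^ j) * Q + f %ₘ Q := by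
          rw [Finset.sum_mul]
          simp only [e1]
          show _ + digits Q 0 f * Q ^ 0 = _
          simp [digits]
      _ = (f /ₘ Q) * Q + f %ₘ Q := by rw [key]
      _ = f := by
          have := modByMonic_add_div f Q
          linear_combination this

lemma digits_eq_zero {Q : Polynomial K} (hQ : Q.Monic) :
    ∀ (k : ℕ) (f : Polynomial K), f.natDegree < Q.natDegree * k → digits Q k f = 0 := by
  intro k
  induction k with
  | zero => intro f hf; simp at hf
  | succ k ih =>
    intro f hf
    show digits Q k (f /ₘ Q) = 0
    by_cases h0 : f /ₘ Q = 0
    · rw [h0]; exact digits_zero Q k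
    · apply ih
      rw [natDegree_divByMonic f hQ]
      have hge : Q.natDegree ≤ f.natDegree := by
        by_contra hc
        push_neg at hc
        exact h0 ((divByMonic_eq_zero_iff hQ).2 (degree_lt_degree hc))
      have h1 : Q.natDegree * (k + 1) = Q.natDegree * k + Q.natDegree := by ring
      rw [h1] at hf
      omega



variable {μ ν : PolyValuation K}

lemma const_eq (hle : ∀ f, μ.v f ≤ ν.v f) {a : K} (ha : a ≠ 0) :
    μ.v (C a) = ν.v (C a) := by
  have h1 : μ.v (C a) + μ.v (C a⁻¹) = 0 := by
    rw [← μ.map_mul, ← C_mul, mul_inv_cancel₀ ha, C_1, μ.map_one]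
  have h2 : ν.v (C a) + ν.v (C a⁻¹) = 0 := by
    rw [← ν.map_mul, ← C_mul, mul_inv_cancel₀ ha, C_1, ν.map_one]
  by_contra hc
  have hlt : μ.v (C a) < ν.v (C a) := lt_of_le_of_ne (hle _) hc
  have hnt : μ.v (C a⁻¹) ≠ ⊤ := by
    intro h
    rw [h, EReal.add_top_of_ne_bot (μ.ne_bot _)] at h1
    exact absurd h1 (by simp)
  obtain ⟨r, hr⟩ := ereal_exists_real (μ.ne_bot (C a⁻¹)) hnt
  have : (0 : EReal) < 0 := by
    calc (0 : EReal) = μ.v (C a) + μ.v (C a⁻¹) := h1.symm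
      _ = μ.v (C a) + (r : EReal) := by rw [hr]
      _ < ν.v (C a) + (r : EReal) := EReal.add_lt_add_right_coe hlt r
      _ = ν.v (C a) + μ.v (C a⁻¹) := by rw [hr]
      _ ≤ ν.v (C a) + ν.v (C a⁻¹) := add_le_add_right (hle _) _
      _ = 0 := h2
  exact absurd this (lt_irrefl _)

lemma small_eq (hle : ∀ f, μ.v f ≤ ν.v f) {f : Polynomial K}
    (hf : f.natDegree < dmn μ ν) : μ.v f = ν.v f := by
  by_cases h0 : f = 0
  · rw [h0, μ.map_zero, ν.map_zero]
  · set a := f.leadingCoeff with ha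
    have ha0 : a ≠ 0 := leadingCoeff_ne_zero.2 h0
    set g := f * C a⁻¹ with hg
    have hgm : g.Monic := monic_mul_leadingCoeff_inv h0
    have hgd : g.natDegree = f.natDegree := by
      rw [hg, natDegree_mul h0 (by simp [ha0]), natDegree_C, add_zero]
    have hgv : μ.v g = ν.v g := by
      by_contra hc
      have hlt : μ.v g < ν.v g := lt_of_le_of_ne (hle g) hc
      have : dmn μ ν ≤ g.natDegree :=
        Nat.sInf_le ⟨g, hgm, rfl, hlt⟩
      omega
    have hfg : f = g * C a := by
      rw [hg, mul_assoc, ← C_mul, inv_mul_cancel₀ ha0, C_1, mul_one]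
    rw [hfg, μ.map_mul, ν.map_mul, hgv, const_eq hle ha0]

section Qprime

variable {Q' : Polynomial K} {w' : Polynomial K → EReal}

lemma natDeg_lt (hd : 1 ≤ Q'.natDegree) {f : Polynomial K}
    (h : f.degree < Q'.degree) : f.natDegree < Q'.natDegree := by
  by_cases h0 : f = 0
  · rw [h0, natDegree_zero]; omega
  · exact natDegree_lt_natDegree h0 h

lemma bot_lt_degQ' (hd : 1 ≤ Q'.natDegree) {f : Polynomial K} (hf : f = 0) :
    f.degree < Q'.degree := by
  rw [hf, degree_zero]
  have : (0 : WithBot ℕ) < Q'.degree := natDegree_pos_iff_degree_pos.1 (by omega)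
  exact lt_of_le_of_lt bot_le this

lemma key_L (hle : ∀ f, μ.v f ≤ ν.v f) (hQ'm : Q'.Monic)
    (hQ'd : Q'.natDegree = dmn μ ν) (hQ'v : μ.v Q' < ν.v Q') (hd : 1 ≤ Q'.natDegree)
    (a b : Polynomial K) (ha : a.degree < Q'.degree) (hb : b.degree < Q'.degree) :
    ν.v a + ν.v b ≤ ν.v ((a * b) %ₘ Q') ∧
      ν.v a + ν.v b ≤ ν.v ((a * b) /ₘ Q') + ν.v Q' := by
  by_cases ha0 : a = 0
  · rw [ha0, zero_mul, zero_modByMonic, zero_divByMonic, ν.map_zero,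
      EReal.top_add_of_ne_bot (ν.ne_bot b)]
    exact ⟨le_top, le_of_eq (EReal.top_add_of_ne_bot (ν.ne_bot Q')).symm⟩
  by_cases hb0 : b = 0
  · rw [hb0, mul_zero, zero_modByMonic, zero_divByMonic, ν.map_zero,
      EReal.add_top_of_ne_bot (ν.ne_bot a)]
    exact ⟨le_top, le_of_eq (EReal.top_add_of_ne_bot (ν.ne_bot Q')).symm⟩
  set q := (a * b) /ₘ Q' with hq
  set ρ := (a * b) %ₘ Q' with hρ
  have hab : ρ + Q' * q = a * b := modByMonic_add_div (a * b) Q'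
  have ht : ν.v (a * b) = ν.v a + ν.v b := ν.map_mul a b
  by_contra hc
  rw [not_and_or] at hc
  have hlt : min (ν.v ρ) (ν.v (Q' * q)) < ν.v a + ν.v b := by
    rcases hc with h | h
    · push_neg at h
      exact lt_of_le_of_lt (min_le_left _ _) h
    · push_neg at h
      refine lt_of_le_of_lt (min_le_right _ _) ?_
      rwa [ν.map_mul, add_comm]
  have heq : ν.v ρ = ν.v (Q' * q) := by
    by_contra hne
    have hmin : ν.v (ρ + Q' * q) = min (ν.v ρ) (ν.v (Q' * q)) := by
      rcases lt_or_gt_of_ne hne with h | h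
      · rw [v_add_eq ν h, min_eq_left h.le]
      · rw [v_add_eq' ν h, min_eq_right h.le]
    rw [hab, ht] at hmin
    rw [← hmin] at hlt
    exact lt_irrefl _ hlt
  rw [heq, min_self] at hlt
  -- hlt : ν.v (Q' * q) < ν.v a + ν.v b, heq : ν.v ρ = ν.v (Q' * q)
  have hρ_ne_top : ν.v ρ ≠ ⊤ := by
    intro h; rw [heq] at h; rw [h] at hlt; exact absurd hlt not_top_lt
  have hρ0 : ρ ≠ 0 := by
    intro h; apply hρ_ne_top; rw [h, ν.map_zero]
  obtain ⟨r, hr⟩ := ereal_exists_real (ν.ne_bot ρ) hρ_ne_top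
  have hq_ne_top : ν.v q ≠ ⊤ := by
    intro h
    rw [ν.map_mul, h, EReal.add_top_of_ne_bot (ν.ne_bot Q')] at hlt
    exact absurd hlt not_top_lt
  have hq0 : q ≠ 0 := by
    intro h; apply hq_ne_top; rw [h, ν.map_zero]
  obtain ⟨u, hu⟩ := ereal_exists_real (ν.ne_bot q) hq_ne_top
  -- degree bounds
  have hand : a.natDegree < Q'.natDegree := natDeg_lt hd ha
  have hbnd : b.natDegree < Q'.natDegree := natDeg_lt hd hb
  have habd : (a * b).natDegree = a.natDegree + b.natDegree := natDegree_mul ha0 hb0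
  have hqdeg : q.degree < Q'.degree := by
    apply degree_lt_degree
    rw [hq, natDegree_divByMonic _ hQ'm]
    omega
  have hρdeg : ρ.degree < Q'.degree := degree_modByMonic_lt _ hQ'm
  -- μ agrees with ν on small degrees
  have hsmall : ∀ {f : Polynomial K}, f.degree < Q'.degree → μ.v f = ν.v f := by
    intro f hf
    exact small_eq hle (by rw [← hQ'd]; exact natDeg_lt hd hf)
  have hμq : μ.v q = (u : EReal) := by rw [hsmall hqdeg, hu]
  have hμρ : μ.v ρ = (r : EReal) := by rw [hsmall hρdeg, hr]
  have hμab : μ.v (a * b) = ν.v a + ν.v b := by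
    rw [μ.map_mul, hsmall ha, hsmall hb]
  -- ν.v (Q' * q) = ν.v Q' + u = r
  have hνQq : ν.v Q' + (u : EReal) = (r : EReal) := by
    rw [← hu, ← ν.map_mul, ← heq, hr]
  have hμQq : μ.v (Q' * q) < (r : EReal) := by
    rw [μ.map_mul, hμq, ← hνQq]
    exact EReal.add_lt_add_right_coe hQ'v u
  have hμQqρ : μ.v (Q' * q) < μ.v ρ := by rw [hμρ]; exact hμQq
  have hmain : μ.v (a * b) = μ.v (Q' * q) := by
    rw [← hab, add_comm]
    exact v_add_eq μ hμQqρ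
  have hfinal : ν.v a + ν.v b < ν.v a + ν.v b := by
    calc ν.v a + ν.v b = μ.v (a * b) := hμab.symm
      _ = μ.v (Q' * q) := hmain
      _ < (r : EReal) := hμQq
      _ = ν.v ρ := hr.symm
      _ = ν.v (Q' * q) := heq
      _ < ν.v a + ν.v b := hlt
  exact absurd hfinal (lt_irrefl _)

end Qprime


section W

variable {Q' : Polynomial K} {w' : Polynomial K → EReal}

lemma self_lt_mul (hd : 1 ≤ Q'.natDegree) (n : ℕ) : n < Q'.natDegree * (n + 1) := by
  have : n + 1 ≤ Q'.natDegree * (n + 1) := Nat.le_mul_of_pos_left _ (by omega)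
  omega

lemma w'_eval (hQ'm : Q'.Monic) (hd : 1 ≤ Q'.natDegree)
    (hw' : IsTruncation ν Q' w') (f : Polynomial K) (s : ℕ)
    (hs : f.natDegree < Q'.natDegree * (s + 1)) :
    w' f = (Finset.range (s + 1)).inf (fun j => ν.v (digits Q' j f * Q' ^ j)) :=
  hw' f s (fun j => digits Q' j f) (fun j _ => digits_degree_lt hQ'm j f)
    (digits_sum hQ'm hd s f hs).symm

lemma w'_le_v (hQ'm : Q'.Monic) (hd : 1 ≤ Q'.natDegree)
    (hw' : IsTruncation ν Q' w') (f : Polynomial K) : w' f ≤ ν.v f := by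
  rw [w'_eval hQ'm hd hw' f f.natDegree (self_lt_mul hd _)]
  conv_rhs => rw [← digits_sum hQ'm hd f.natDegree f (self_lt_mul hd _)]
  exact v_sum ν _ _

lemma w'_zero (hd : 1 ≤ Q'.natDegree) (hw' : IsTruncation ν Q' w') : w' 0 = ⊤ := by
  have h := hw' 0 0 (fun _ => 0) (fun j _ => bot_lt_degQ' hd rfl) (by simp)
  rw [h]
  simp [ν.map_zero]

lemma w'_add (hQ'm : Q'.Monic) (hd : 1 ≤ Q'.natDegree)
    (hw' : IsTruncation ν Q' w') (g h : Polynomial K) :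
    min (w' g) (w' h) ≤ w' (g + h) := by
  set s := max (max g.natDegree h.natDegree) (g + h).natDegree with hs
  have hgs : g.natDegree < Q'.natDegree * (s + 1) :=
    lt_of_le_of_lt (le_trans (le_max_left _ _) (le_max_left _ _)) (self_lt_mul hd s)
  have hhs : h.natDegree < Q'.natDegree * (s + 1) :=
    lt_of_le_of_lt (le_trans (le_max_right _ _) (le_max_left _ _)) (self_lt_mul hd s)
  have hghs : (g + h).natDegree < Q'.natDegree * (s + 1) :=
    lt_of_le_of_lt (le_max_right _ _) (self_lt_mul hd s)
  have e : g + h = ∑ j ∈ Finset.range (s + 1),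
      (digits Q' j g + digits Q' j h) * Q' ^ j := by
    simp only [add_mul, Finset.sum_add_distrib, digits_sum hQ'm hd s g hgs,
      digits_sum hQ'm hd s h hhs]
  rw [hw' (g + h) s _ (fun j _ => lt_of_le_of_lt (degree_add_le _ _)
      (max_lt (digits_degree_lt hQ'm j g) (digits_degree_lt hQ'm j h))) e]
  refine Finset.le_inf fun j hj => ?_
  have h1 : w' g ≤ ν.v (digits Q' j g * Q' ^ j) := by
    rw [w'_eval hQ'm hd hw' g s hgs]; exact Finset.inf_le hj
  have h2 : w' h ≤ ν.v (digits Q' j h * Q' ^ j) := by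
    rw [w'_eval hQ'm hd hw' h s hhs]; exact Finset.inf_le hj
  calc min (w' g) (w' h)
      ≤ min (ν.v (digits Q' j g * Q' ^ j)) (ν.v (digits Q' j h * Q' ^ j)) :=
        min_le_min h1 h2
    _ ≤ ν.v ((digits Q' j g + digits Q' j h) * Q' ^ j) := by
        rw [add_mul]; exact ν.add_ge _ _

lemma w'_sum_ge (hQ'm : Q'.Monic) (hd : 1 ≤ Q'.natDegree)
    (hw' : IsTruncation ν Q' w') (n : ℕ) (g : ℕ → Polynomial K) :
    (Finset.range n).inf (fun j => w' (g j)) ≤ w' (∑ j ∈ Finset.range n, g j) := by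
  induction n with
  | zero => simp [w'_zero hd hw']
  | succ n ih =>
    rw [Finset.sum_range_succ]
    refine le_trans (le_min ?_ ?_) (w'_add hQ'm hd hw' _ _)
    · exact le_trans (Finset.inf_mono (Finset.range_subset_range.2 (Nat.le_succ n))) ih
    · exact Finset.inf_le (Finset.self_mem_range_succ n)

lemma exact_base (hQ'm : Q'.Monic) (hd : 1 ≤ Q'.natDegree)
    (hw' : IsTruncation ν Q' w') {c : Polynomial K} (hc : c.degree < Q'.degree) :
    ν.v c ≤ w' c := by
  have h := hw' c 0 (fun _ => c) (fun j _ => hc) (by simp)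
  rw [h]
  simp

end W

section EM

variable {μ ν : PolyValuation K} {Q' : Polynomial K} {w' : Polynomial K → EReal}

lemma exact_mul (hle : ∀ f, μ.v f ≤ ν.v f) (hQ'm : Q'.Monic)
    (hQ'd : Q'.natDegree = dmn μ ν) (hQ'v : μ.v Q' < ν.v Q') (hd : 1 ≤ Q'.natDegree)
    (hw' : IsTruncation ν Q' w') (b c : Polynomial K)
    (hb : ν.v b ≤ w' b) (hc : c.degree < Q'.degree) :
    ν.v (b * c) ≤ w' (b * c) := by
  set s := b.natDegree with hs
  set ρ : ℕ → Polynomial K := fun k => digits Q' k b with hρ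
  set τ : ℕ → Polynomial K := fun k => (ρ k * c) %ₘ Q' with hτ
  set q : ℕ → Polynomial K := fun k => (ρ k * c) /ₘ Q' with hq
  set σ : ℕ → Polynomial K :=
    fun m => Nat.casesOn m (τ 0) (fun k => τ (k + 1) + q k) with hσ
  have hρ_deg : ∀ k, (ρ k).degree < Q'.degree := fun k => digits_degree_lt hQ'm k b
  have hτ_deg : ∀ k, (τ k).degree < Q'.degree := fun k => degree_modByMonic_lt _ hQ'm
  have hq_deg : ∀ k, (q k).degree < Q'.degree := by
    intro k
    by_cases h0 : q k = 0
    · exact bot_lt_degQ' hd h0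
    · apply degree_lt_degree
      rw [hq]
      show ((ρ k * c) /ₘ Q').natDegree < Q'.natDegree
      rw [natDegree_divByMonic _ hQ'm]
      have h1 : (ρ k * c).natDegree ≤ (ρ k).natDegree + c.natDegree :=
        natDegree_mul_le
      have h2 : (ρ k).natDegree < Q'.natDegree := natDeg_lt hd (hρ_deg k)
      have h3 : c.natDegree < Q'.natDegree := natDeg_lt hd hc
      omega
  have hL : ∀ k, ν.v (ρ k) + ν.v c ≤ ν.v (τ k) ∧
      ν.v (ρ k) + ν.v c ≤ ν.v (q k) + ν.v Q' :=
    fun k => key_L hle hQ'm hQ'd hQ'v hd (ρ k) c (hρ_deg k) hc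
  have hρτq : ∀ k, ρ k * c = τ k + Q' * q k :=
    fun k => (modByMonic_add_div _ Q').symm
  have hσ_deg : ∀ m, (σ m).degree < Q'.degree := by
    intro m
    cases m with
    | zero => exact hτ_deg 0
    | succ k =>
      exact lt_of_le_of_lt (degree_add_le _ _) (max_lt (hτ_deg (k + 1)) (hq_deg k))
  have hρs1 : ρ (s + 1) = 0 :=
    digits_eq_zero hQ'm (s + 1) b (by rw [← hs]; exact self_lt_mul hd s)
  have hτs1 : τ (s + 1) = 0 := by
    rw [hτ]
    show (ρ (s + 1) * c) %ₘ Q' = 0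
    rw [hρs1, zero_mul, zero_modByMonic]
  have hbsum : b = ∑ k ∈ Finset.range (s + 1), ρ k * Q' ^ k :=
    (digits_sum hQ'm hd s b (self_lt_mul hd s)).symm
  have hsum : b * c = ∑ m ∈ Finset.range (s + 1 + 1), σ m * Q' ^ m := by
    have step1 : b * c = ∑ k ∈ Finset.range (s + 1), (ρ k * c) * Q' ^ k := by
      conv_lhs => rw [hbsum]
      rw [Finset.sum_mul]
      exact Finset.sum_congr rfl fun k _ => by ring
    have step2 : ∀ k, (ρ k * c) * Q' ^ k = τ k * Q' ^ k + q k * Q' ^ (k + 1) := by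
      intro k
      rw [hρτq k, pow_succ]
      ring
    rw [step1, Finset.sum_congr rfl fun k _ => step2 k, Finset.sum_add_distrib]
    rw [Finset.sum_range_succ' (fun m => σ m * Q' ^ m) (s + 1)]
    have e2 : ∀ m, σ (m + 1) * Q' ^ (m + 1) =
        τ (m + 1) * Q' ^ (m + 1) + q m * Q' ^ (m + 1) := by
      intro m
      show (τ (m + 1) + q m) * Q' ^ (m + 1) = _
      ring
    rw [Finset.sum_congr rfl fun m _ => e2 m, Finset.sum_add_distrib]
    have e3 : ∑ k ∈ Finset.range (s + 1), τ k * Q' ^ k =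
        (∑ m ∈ Finset.range (s + 1), τ (m + 1) * Q' ^ (m + 1)) + σ 0 * Q' ^ 0 := by
      rw [Finset.sum_range_succ (fun m => τ (m + 1) * Q' ^ (m + 1)) s]
      rw [hτs1, zero_mul, add_zero]
      rw [Finset.sum_range_succ' (fun k => τ k * Q' ^ k) s]
      rfl
    rw [e3]
    ring
  have hbs : b.natDegree < Q'.natDegree * (s + 1) := self_lt_mul hd s
  have hbase : ∀ k, k ≤ s → ν.v b ≤ ν.v (ρ k) + ν.v (Q' ^ k) := by
    intro k hk
    refine le_trans hb ?_
    rw [w'_eval hQ'm hd hw' b s hbs]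
    have hkmem : k ∈ Finset.range (s + 1) := Finset.mem_range.2 (by omega)
    refine le_trans (Finset.inf_le hkmem) ?_
    exact le_of_eq (ν.map_mul _ _)
  have hτ_branch : ∀ m, m ≤ s → ν.v b + ν.v c ≤ ν.v (τ m * Q' ^ m) := by
    intro m hm
    calc ν.v b + ν.v c ≤ (ν.v (ρ m) + ν.v (Q' ^ m)) + ν.v c :=
          add_le_add_left (hbase m hm) _
      _ = (ν.v (ρ m) + ν.v c) + ν.v (Q' ^ m) := add_right_comm _ _ _
      _ ≤ ν.v (τ m) + ν.v (Q' ^ m) := add_le_add_left (hL m).1 _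
      _ = ν.v (τ m * Q' ^ m) := (ν.map_mul _ _).symm
  have hq_branch : ∀ k, k ≤ s → ν.v b + ν.v c ≤ ν.v (q k * Q' ^ (k + 1)) := by
    intro k hk
    calc ν.v b + ν.v c ≤ (ν.v (ρ k) + ν.v (Q' ^ k)) + ν.v c :=
          add_le_add_left (hbase k hk) _
      _ = (ν.v (ρ k) + ν.v c) + ν.v (Q' ^ k) := add_right_comm _ _ _
      _ ≤ (ν.v (q k) + ν.v Q') + ν.v (Q' ^ k) := add_le_add_left (hL k).2 _
      _ = ν.v (q k) + ν.v (Q' ^ (k + 1)) := by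
          rw [add_assoc, pow_succ, ν.map_mul, add_comm (ν.v Q') _]
      _ = ν.v (q k * Q' ^ (k + 1)) := (ν.map_mul _ _).symm
  rw [hw' (b * c) (s + 1) σ (fun m _ => hσ_deg m) hsum, ν.map_mul b c]
  refine Finset.le_inf fun m hm => ?_
  have hm' : m < s + 2 := Finset.mem_range.1 hm
  cases m with
  | zero => exact hτ_branch 0 (by omega)
  | succ k =>
    show ν.v b + ν.v c ≤ ν.v ((τ (k + 1) + q k) * Q' ^ (k + 1))
    rw [add_mul]
    refine le_trans (le_min ?_ (hq_branch k (by omega))) (ν.add_ge _ _)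
    by_cases hks : k + 1 ≤ s
    · exact hτ_branch (k + 1) hks
    · have : k + 1 = s + 1 := by omega
      rw [this, hτs1, zero_mul, ν.map_zero]
      exact le_top

end EM

section FIN

variable {μ ν : PolyValuation K} {Q Q' : Polynomial K}
  {w w' : Polynomial K → EReal}

lemma exact_r_pow (hle : ∀ f, μ.v f ≤ ν.v f) (hQ'm : Q'.Monic)
    (hQ'd : Q'.natDegree = dmn μ ν) (hQ'v : μ.v Q' < ν.v Q') (hd : 1 ≤ Q'.natDegree)
    (hw' : IsTruncation ν Q' w') {c : Polynomial K} (hc : c.degree < Q'.degree)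
    {r : Polynomial K} (hr : r.degree < Q'.degree) (n : ℕ) :
    ν.v (c * r ^ n) ≤ w' (c * r ^ n) := by
  induction n with
  | zero =>
    rw [pow_zero, mul_one]
    exact exact_base hQ'm hd hw' hc
  | succ n ih =>
    have e : c * r ^ (n + 1) = (c * r ^ n) * r := by ring
    rw [e]
    exact exact_mul hle hQ'm hQ'd hQ'v hd hw' _ r ih hr

lemma w'_mul_Q' (hQ'm : Q'.Monic) (hd : 1 ≤ Q'.natDegree)
    (hw' : IsTruncation ν Q' w') (f : Polynomial K) :
    w' f + ν.v Q' ≤ w' (f * Q') := by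
  set s := f.natDegree with hs
  set c : ℕ → Polynomial K :=
    fun m => Nat.casesOn m 0 (fun k => digits Q' k f) with hcdef
  have hc_deg : ∀ m, (c m).degree < Q'.degree := by
    intro m
    cases m with
    | zero => exact bot_lt_degQ' hd rfl
    | succ k => exact digits_degree_lt hQ'm k f
  have hsum : f * Q' = ∑ m ∈ Finset.range (s + 1 + 1), c m * Q' ^ m := by
    rw [Finset.sum_range_succ' (fun m => c m * Q' ^ m) (s + 1)]
    have e2 : ∀ m, c (m + 1) * Q' ^ (m + 1) = (digits Q' m f * Q' ^ m) * Q' := by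
      intro m
      show digits Q' m f * Q' ^ (m + 1) = _
      rw [pow_succ]; ring
    rw [Finset.sum_congr rfl fun m _ => e2 m]
    show f * Q' = (∑ m ∈ Finset.range (s + 1), (digits Q' m f * Q' ^ m) * Q') +
      (0 : Polynomial K) * Q' ^ 0
    rw [← Finset.sum_mul, digits_sum hQ'm hd s f (self_lt_mul hd s), zero_mul,
      add_zero]
  rw [hw' (f * Q') (s + 1) c (fun m _ => hc_deg m) hsum]
  refine Finset.le_inf fun m hm => ?_
  have hm' : m < s + 2 := Finset.mem_range.1 hm
  cases m with
  | zero =>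
    show w' f + ν.v Q' ≤ ν.v ((0 : Polynomial K) * Q' ^ 0)
    rw [zero_mul, ν.map_zero]
    exact le_top
  | succ k =>
    show w' f + ν.v Q' ≤ ν.v (digits Q' k f * Q' ^ (k + 1))
    have e : digits Q' k f * Q' ^ (k + 1) = (digits Q' k f * Q' ^ k) * Q' := by
      rw [pow_succ]; ring
    rw [e, ν.map_mul]
    refine add_le_add_left ?_ _
    rw [w'_eval hQ'm hd hw' f s (self_lt_mul hd s)]
    exact Finset.inf_le (Finset.mem_range.2 (by omega))

lemma w'_mul_pow (hQ'm : Q'.Monic) (hd : 1 ≤ Q'.natDegree)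
    (hw' : IsTruncation ν Q' w') (a : Polynomial K) (hb : ν.v a ≤ w' a) (i : ℕ) :
    ν.v a + ν.v (Q' ^ i) ≤ w' (a * Q' ^ i) := by
  induction i with
  | zero =>
    rw [pow_zero, mul_one, ν.map_one, add_zero]
    exact hb
  | succ i ih =>
    have e : a * Q' ^ (i + 1) = (a * Q' ^ i) * Q' := by ring
    rw [e]
    calc ν.v a + ν.v (Q' ^ (i + 1)) = (ν.v a + ν.v (Q' ^ i)) + ν.v Q' := by
          rw [pow_succ, ν.map_mul, add_assoc]
      _ ≤ w' (a * Q' ^ i) + ν.v Q' := add_le_add_left ih _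
      _ ≤ w' ((a * Q' ^ i) * Q') := w'_mul_Q' hQ'm hd hw' _

lemma key_c_Qj (hle : ∀ f, μ.v f ≤ ν.v f) (hQm : Q.Monic) (hQ'm : Q'.Monic)
    (hQd : Q.natDegree = Q'.natDegree)
    (hQ'd : Q'.natDegree = dmn μ ν) (hQ'v : μ.v Q' < ν.v Q') (hd : 1 ≤ Q'.natDegree)
    (hQQ' : ν.v Q = ν.v Q') (hw' : IsTruncation ν Q' w')
    {c : Polynomial K} (hc : c.degree < Q'.degree) (j : ℕ) :
    ν.v c + ν.v (Q ^ j) ≤ w' (c * Q ^ j) := by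
  set r := Q - Q' with hrdef
  have hdegQQ' : Q.degree = Q'.degree := by
    rw [degree_eq_natDegree hQm.ne_zero, degree_eq_natDegree hQ'm.ne_zero]
    exact_mod_cast hQd
  have hrdeg : r.degree < Q'.degree := by
    by_cases hQeq : Q = Q'
    · apply bot_lt_degQ' hd
      rw [hrdef, hQeq, sub_self]
    · have h := degree_sub_lt hdegQQ' hQm.ne_zero
        (by rw [hQm.leadingCoeff, hQ'm.leadingCoeff])
      rw [← hdegQQ']
      exact h
  have hrv : ν.v Q' ≤ ν.v r := by
    have e : r = Q + -Q' := by rw [hrdef, sub_eq_add_neg]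
    calc ν.v Q' = min (ν.v Q) (ν.v (-Q')) := by rw [v_neg_s11, hQQ', min_self]
      _ ≤ ν.v (Q + -Q') := ν.add_ge _ _
      _ = ν.v r := by rw [← e]
  have hQ'r : Q = Q' + r := by rw [hrdef]; ring
  have hexp : c * Q ^ j = ∑ i ∈ Finset.range (j + 1),
      (c * r ^ (j - i) * (j.choose i : Polynomial K)) * Q' ^ i := by
    conv_lhs => rw [hQ'r]
    rw [add_pow, Finset.mul_sum]
    exact Finset.sum_congr rfl fun i _ => by ring
  rw [hexp]
  refine le_trans (Finset.le_inf fun i hi => ?_) (w'_sum_ge hQ'm hd hw' _ _)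
  have hij : i ≤ j := by
    have := Finset.mem_range.1 hi
    omega
  set a := c * r ^ (j - i) * (j.choose i : Polynomial K) with hadef
  have hnc_deg : ((j.choose i : ℕ) : Polynomial K).degree < Q'.degree :=
    lt_of_le_of_lt (degree_natCast_le _)
      (natDegree_pos_iff_degree_pos.1 (by omega))
  have hterm : ν.v a ≤ w' a :=
    exact_mul hle hQ'm hQ'd hQ'v hd hw' (c * r ^ (j - i)) _
      (exact_r_pow hle hQ'm hQ'd hQ'v hd hw' hc hrdeg (j - i)) hnc_deg
  have hsplit : ν.v c + ν.v (Q ^ j) ≤ ν.v a + ν.v (Q' ^ i) := by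
    have h1 : ν.v (Q ^ j) = ν.v (Q' ^ (j - i)) + ν.v (Q' ^ i) := by
      rw [v_pow_congr ν hQQ' j, ← ν.map_mul, ← pow_add]
      congr 2
      omega
    have h2 : ν.v (Q' ^ (j - i)) ≤ ν.v (r ^ (j - i)) + ν.v ((j.choose i : ℕ) : Polynomial K) := by
      refine le_trans (v_pow_le ν hrv (j - i)) ?_
      exact le_add_of_nonneg_right (v_natCast ν _)
    calc ν.v c + ν.v (Q ^ j)
        = ν.v c + (ν.v (Q' ^ (j - i)) + ν.v (Q' ^ i)) := by rw [h1]
      _ ≤ ν.v c + ((ν.v (r ^ (j - i)) + ν.v ((j.choose i : ℕ) : Polynomial K)) + ν.v (Q' ^ i)) := by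
          exact add_le_add_right (add_le_add_left h2 _) _
      _ = (ν.v c + ν.v (r ^ (j - i)) + ν.v ((j.choose i : ℕ) : Polynomial K)) + ν.v (Q' ^ i) := by
          rw [add_assoc, add_assoc, add_assoc]
      _ = ν.v a + ν.v (Q' ^ i) := by
          rw [hadef, ν.map_mul, ν.map_mul]
  exact le_trans hsplit (w'_mul_pow hQ'm hd hw' a hterm i)

lemma dpos (hm : Q'.Monic) (hv : μ.v Q' < ν.v Q') : 1 ≤ Q'.natDegree := by
  by_contra hc
  push_neg at hc
  have h0 : Q'.natDegree = 0 := by omega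
  have h1 : Q' = 1 := (hm.natDegree_eq_zero).1 h0
  rw [h1, μ.map_one, ν.map_one] at hv
  exact lt_irrefl _ hv

lemma half (hle : ∀ f, μ.v f ≤ ν.v f) (hQ : Q ∈ Phi μ ν) (hQ' : Q' ∈ Phi μ ν)
    (hQQ' : ν.v Q = ν.v Q') (hw : IsTruncation ν Q w) (hw' : IsTruncation ν Q' w')
    (f : Polynomial K) : w f ≤ w' f := by
  obtain ⟨hQm, hQd, hQv⟩ := hQ
  obtain ⟨hQ'm, hQ'd, hQ'v⟩ := hQ'
  have hd : 1 ≤ Q'.natDegree := dpos hQ'm hQ'v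
  have hdQ : 1 ≤ Q.natDegree := dpos hQm hQv
  have hQdd : Q.natDegree = Q'.natDegree := by rw [hQd, hQ'd]
  set s := f.natDegree with hs
  have hself : f.natDegree < Q.natDegree * (s + 1) := by
    have : s + 1 ≤ Q.natDegree * (s + 1) := Nat.le_mul_of_pos_left _ (by omega)
    omega
  have hfsum : f = ∑ j ∈ Finset.range (s + 1), digits Q j f * Q ^ j :=
    (digits_sum hQm hdQ s f hself).symm
  rw [hw f s (fun j => digits Q j f) (fun j _ => digits_degree_lt hQm j f) hfsum]
  have h1 : (Finset.range (s + 1)).inf (fun j => w' (digits Q j f * Q ^ j)) ≤ w' f := by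
    conv_rhs => rw [hfsum]
    exact w'_sum_ge hQ'm hd hw' _ _
  refine le_trans (Finset.le_inf fun j hj => ?_) h1
  refine le_trans (Finset.inf_le hj) ?_
  rw [ν.map_mul]
  have hcdeg : (digits Q j f).degree < Q'.degree := by
    have := digits_degree_lt hQm j f
    rw [degree_eq_natDegree hQm.ne_zero, degree_eq_natDegree hQ'm.ne_zero] at *
    rw [← hQdd]
    exact this
  exact key_c_Qj hle hQm hQ'm hQdd hQ'd hQ'v hd hQQ' hw' hcdeg j

end FIN

end PV

/-- Let `μ < ν` be valuations on `K[y]` with the strictly positive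
values of `μ` well-ordered.  If `Q, Q' ∈ Φ_μ(ν)` satisfy `ν(Q) = ν(Q') = β_μ(ν)`,
then the truncations of `ν` with respect to `Q` and `Q'` coincide. -/
theorem truncation_independent_of_choice
    (μ ν : PolyValuation K)
    (hle : ∀ f : Polynomial K, μ.v f ≤ ν.v f) (hne : μ.v ≠ ν.v)
    (hwf : PosValuesWF μ)
    (Q Q' : Polynomial K) (hQ : Q ∈ Phi μ ν) (hQ' : Q' ∈ Phi μ ν)
    (hQval : ν.v Q = betaMN μ ν) (hQ'val : ν.v Q' = betaMN μ ν)
    (w w' : Polynomial K → EReal)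
    (hw : IsTruncation ν Q w) (hw' : IsTruncation ν Q' w') :
    ∀ f : Polynomial K, w f = w' f := by
  have hQQ' : ν.v Q = ν.v Q' := by rw [hQval, hQ'val]
  intro f
  exact le_antisymm (PV.half hle hQ hQ' hQQ' hw hw' f)
    (PV.half hle hQ' hQ hQQ'.symm hw' hw f)
end

section
/- Let K be a field and let μ < ν be valuations on K[y] such that the set of strictly positive values taken by μ is well-ordered. Let Q ∈ Φ_μ(ν) with ν(Q) = β_μ(ν) and let ν_Q be the truncation of ν with respect to Q. Let f ∈ K[y] satisfy ν_Q(f) = μ(f) < ∞, and let f = qQ + r be the Euclidean division of f by Q (deg r < deg Q). Then ν_Q(f) = ν_Q(r) and ν_Q(r) < ν_Q(qQ). -/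
open Polynomial

variable {K : Type*} [Field K]

namespace Stmt12Aux

lemma self_add_self {x : EReal} (hx : x ≠ ⊥) (h : x + x = 0) : x = 0 := by
  induction x with
  | bot => exact absurd rfl hx
  | coe a =>
      have : (a + a : ℝ) = (0 : ℝ) := by exact_mod_cast h
      have : a = 0 := by linarith
      exact_mod_cast this
  | top => simp at h

lemma v_neg (ν : PolyValuation K) (a : Polynomial K) : ν.v (-a) = ν.v a := by
  have h1 : ν.v (-1 : Polynomial K) = 0 := by
    apply self_add_self (ν.ne_bot _)
    rw [← ν.map_mul]; norm_num [ν.map_one]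
  have h2 : (-a : Polynomial K) = (-1) * a := by ring
  rw [h2, ν.map_mul, h1, zero_add]

lemma v_add_lt (ν : PolyValuation K) {a b : Polynomial K} (h : ν.v a < ν.v b) :
    ν.v (a + b) = ν.v a := by
  refine le_antisymm ?_ ?_
  · have h2 := ν.add_ge (a + b) (-b)
    rw [add_neg_cancel_right, v_neg] at h2
    rcases le_total (ν.v (a+b)) (ν.v b) with hc | hc
    · rwa [min_eq_left hc] at h2
    · rw [min_eq_right hc] at h2
      exact absurd h2 (not_le.2 h)
  · have h3 := ν.add_ge a b
    rwa [min_eq_left h.le] at h3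

lemma ereal_eq_of_le_of_add_eq {a b a' b' : EReal} (h1 : a ≤ a') (h2 : b ≤ b')
    (ha : a ≠ ⊥) (hb : b ≠ ⊥) (hs : a + b = 0) (hs' : a' + b' = 0) : a = a' := by
  have hb'B : b' ≠ ⊥ := fun h => hb (le_bot_iff.1 (h ▸ h2))
  have ha'B : a' ≠ ⊥ := fun h => ha (le_bot_iff.1 (h ▸ h1))
  have hb'T : b' ≠ ⊤ := by
    intro h
    rw [h, EReal.add_top_of_ne_bot ha'B] at hs'
    simp at hs'
  refine le_antisymm h1 (not_lt.1 ?_)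
  intro hlt
  have : a + b < a' + b' := EReal.add_lt_add_of_lt_of_le hlt h2 hb hb'T
  rw [hs, hs'] at this
  exact lt_irrefl _ this

lemma v_C_eq (μ ν : PolyValuation K) (hle : ∀ f, μ.v f ≤ ν.v f) {u : K} (hu : u ≠ 0) :
    μ.v (Polynomial.C u) = ν.v (Polynomial.C u) := by
  have key : ∀ (ρ : PolyValuation K), ρ.v (C u) + ρ.v (C u⁻¹) = 0 := by
    intro ρ
    rw [← ρ.map_mul, ← C_mul, mul_inv_cancel₀ hu, C_1, ρ.map_one]
  exact ereal_eq_of_le_of_add_eq (hle _) (hle _) (μ.ne_bot _) (μ.ne_bot _) (key μ) (key ν)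

noncomputable def ecoeff (Q : Polynomial K) : ℕ → Polynomial K → Polynomial K
  | 0, g => g %ₘ Q
  | (j+1), g => ecoeff Q j (g /ₘ Q)

lemma ecoeff_degree {Q : Polynomial K} (hQ : Q.Monic) (j : ℕ) (g : Polynomial K) :
    (ecoeff Q j g).degree < Q.degree := by
  induction j generalizing g with
  | zero => exact degree_modByMonic_lt g hQ
  | succ j ih => exact ih _

lemma ecoeff_sum {Q : Polynomial K} (hQ : Q.Monic) (hQ1 : 1 ≤ Q.natDegree) :
    ∀ (n : ℕ) (g : Polynomial K), g.natDegree ≤ n →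
      g = ∑ j ∈ Finset.range (n + 1), ecoeff Q j g * Q ^ j := by
  intro n
  induction n with
  | zero =>
      intro g hg
      have hdeg : g.degree < Q.degree := by
        calc g.degree ≤ (g.natDegree : WithBot ℕ) := degree_le_natDegree
        _ ≤ ((0:ℕ) : WithBot ℕ) := by exact_mod_cast hg
        _ < Q.degree := by
            rw [degree_eq_natDegree hQ.ne_zero]
            exact_mod_cast hQ1
      simp [ecoeff, (modByMonic_eq_self_iff hQ).2 hdeg]
  | succ n ih =>
      intro g hg
      have hq1 : (g /ₘ Q).natDegree ≤ n := by
        rw [natDegree_divByMonic g hQ]; omega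
      rw [Finset.sum_range_succ']
      have hterm : ∀ j, ecoeff Q (j+1) g * Q ^ (j+1) = (ecoeff Q j (g /ₘ Q) * Q ^ j) * Q := by
        intro j
        show ecoeff Q j (g /ₘ Q) * Q ^ (j+1) = _
        rw [pow_succ, mul_assoc]
      rw [Finset.sum_congr rfl (fun j _ => hterm j), ← Finset.sum_mul, ← ih _ hq1]
      show g = (g /ₘ Q) * Q + ecoeff Q 0 g * Q ^ 0
      have : ecoeff Q 0 g = g %ₘ Q := rfl
      rw [this, pow_zero, mul_one]
      conv_lhs => rw [← modByMonic_add_div g Q]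
      ring

section Main

variable {μ ν : PolyValuation K} {Q : Polynomial K} {w : Polynomial K → EReal}

lemma w_formula (hQm : Q.Monic) (hQ1 : 1 ≤ Q.natDegree) (hw : IsTruncation ν Q w)
    {n : ℕ} {g : Polynomial K} (hg : g.natDegree ≤ n) :
    w g = (Finset.range (n+1)).inf (fun j => ν.v (ecoeff Q j g * Q ^ j)) :=
  hw g n (fun j => ecoeff Q j g) (fun j _ => ecoeff_degree hQm j g) (ecoeff_sum hQm hQ1 n g hg)

lemma inf_le_v_sum (ν : PolyValuation K) (s : Finset ℕ) (h : ℕ → Polynomial K) :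
    s.inf (fun i => ν.v (h i)) ≤ ν.v (∑ i ∈ s, h i) := by
  induction s using Finset.cons_induction with
  | empty => simp [ν.map_zero]
  | cons a s ha ih =>
      rw [Finset.sum_cons, Finset.inf_cons]
      refine le_trans (le_min inf_le_left (le_trans inf_le_right ih)) (ν.add_ge (h a) _)

lemma w_le_v (hQm : Q.Monic) (hQ1 : 1 ≤ Q.natDegree) (hw : IsTruncation ν Q w)
    (g : Polynomial K) : w g ≤ ν.v g := by
  rw [w_formula hQm hQ1 hw (le_refl g.natDegree)]
  have h2 := inf_le_v_sum ν (Finset.range (g.natDegree+1)) (fun j => ecoeff Q j g * Q ^ j)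
  rwa [← ecoeff_sum hQm hQ1 _ g le_rfl] at h2

lemma w_ne_bot (hQm : Q.Monic) (hQ1 : 1 ≤ Q.natDegree) (hw : IsTruncation ν Q w)
    (g : Polynomial K) : w g ≠ ⊥ := by
  rw [w_formula hQm hQ1 hw (le_refl g.natDegree)]
  obtain ⟨j, hj, hje⟩ := Finset.exists_mem_eq_inf (Finset.range (g.natDegree+1))
    ⟨0, by simp⟩ (fun j => ν.v (ecoeff Q j g * Q ^ j))
  rw [hje]
  exact ν.ne_bot _

lemma v_eq_of_deg_lt (hle : ∀ f, μ.v f ≤ ν.v f) (hd : Q.natDegree = dmn μ ν)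
    (p : Polynomial K) (hp : p.degree < Q.degree) : μ.v p = ν.v p := by
  by_cases hp0 : p = 0
  · rw [hp0, μ.map_zero, ν.map_zero]
  · have hlc : p.leadingCoeff ≠ 0 := leadingCoeff_ne_zero.2 hp0
    have hm : (p * C p.leadingCoeff⁻¹).Monic := monic_mul_leadingCoeff_inv hp0
    have hdeg : (p * C p.leadingCoeff⁻¹).degree = p.degree := degree_mul_leadingCoeff_inv p hp0
    have hmv : μ.v (p * C p.leadingCoeff⁻¹) = ν.v (p * C p.leadingCoeff⁻¹) := by
      by_contra hne2
      have hlt : μ.v (p * C p.leadingCoeff⁻¹) < ν.v (p * C p.leadingCoeff⁻¹) :=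
        lt_of_le_of_ne (hle _) hne2
      have hmem : (p * C p.leadingCoeff⁻¹).natDegree ∈
          {n : ℕ | ∃ f : Polynomial K, f.Monic ∧ f.natDegree = n ∧ μ.v f < ν.v f} :=
        ⟨_, hm, rfl, hlt⟩
      have hinf : dmn μ ν ≤ (p * C p.leadingCoeff⁻¹).natDegree := Nat.sInf_le hmem
      have h1 : (p * C p.leadingCoeff⁻¹).natDegree = p.natDegree := natDegree_eq_of_degree_eq hdeg
      have h2 : p.natDegree < Q.natDegree := natDegree_lt_natDegree hp0 hp
      omega
    have hpe : p = (p * C p.leadingCoeff⁻¹) * C p.leadingCoeff := by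
      rw [mul_assoc, ← C_mul, inv_mul_cancel₀ hlc, C_1, mul_one]
    rw [hpe, μ.map_mul, ν.map_mul, hmv, v_C_eq μ ν hle hlc]

lemma mu_le_w (hle : ∀ f, μ.v f ≤ ν.v f) (hQm : Q.Monic) (hQ1 : 1 ≤ Q.natDegree)
    (hd : Q.natDegree = dmn μ ν) (hQlt : μ.v Q < ν.v Q) (hw : IsTruncation ν Q w) :
    ∀ g : Polynomial K, μ.v g ≤ w g := by
  have hsmall : ∀ p : Polynomial K, p.degree < Q.degree → μ.v p = ν.v p :=
    fun p hp => v_eq_of_deg_lt hle hd p hp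
  have hbotlt : (⊥ : WithBot ℕ) < Q.degree := by
    rw [degree_eq_natDegree hQm.ne_zero]; exact WithBot.bot_lt_coe _
  suffices h : ∀ (n : ℕ) (g : Polynomial K), g.natDegree ≤ n → μ.v g ≤ w g by
    intro g; exact h g.natDegree g le_rfl
  intro n
  induction n using Nat.strong_induction_on with
  | _ n ih =>
    intro g hg
    by_cases hdeg : g.degree < Q.degree
    · have hwg : w g = ν.v g := by
        have h2 := hw g 0 (fun _ => g) (fun j _ => hdeg) (by simp)
        simpa [Finset.range_one] using h2
      rw [hwg, hsmall g hdeg]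
    · push_neg at hdeg
      have hg0 : g ≠ 0 := fun h => (not_lt.2 hdeg) (by rw [h, degree_zero]; exact hbotlt)
      have hnQ : Q.natDegree ≤ g.natDegree := natDegree_le_natDegree hdeg
      have hn1 : 1 ≤ n := le_trans (le_trans hQ1 hnQ) hg
      have hq₁n : (g /ₘ Q).natDegree ≤ n - 1 := by
        rw [natDegree_divByMonic g hQm]; omega
      have hgdec : g %ₘ Q + Q * (g /ₘ Q) = g := modByMonic_add_div g Q
      have hc₀d : (g %ₘ Q).degree < Q.degree := degree_modByMonic_lt g hQm
      have hc₀v : μ.v (g %ₘ Q) = ν.v (g %ₘ Q) := hsmall _ hc₀d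
      have iht : μ.v (g /ₘ Q) ≤ w (g /ₘ Q) := ih (n-1) (by omega) _ hq₁n
      have htb : w (g /ₘ Q) ≠ ⊥ := w_ne_bot hQm hQ1 hw _
      -- part (a) : μ g ≤ ν c₀
      have parta : μ.v g ≤ ν.v (g %ₘ Q) := by
        by_contra hlt
        push_neg at hlt
        have hlt' : μ.v (g %ₘ Q) < μ.v g := by rwa [hc₀v]
        have h1 : μ.v (Q * (g /ₘ Q)) = μ.v (g %ₘ Q) := by
          have h3 : μ.v (-(g %ₘ Q) + g) = μ.v (-(g %ₘ Q)) :=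
            v_add_lt μ (by rwa [v_neg])
          rw [v_neg] at h3
          have h4 : -(g %ₘ Q) + g = Q * (g /ₘ Q) := by linear_combination -hgdec
          rwa [h4] at h3
        have hfin : μ.v (g %ₘ Q) ≠ ⊤ := ne_top_of_lt hlt'
        have hμq₁ : μ.v (g /ₘ Q) ≠ ⊤ := by
          intro h
          rw [μ.map_mul, h, EReal.add_top_of_ne_bot (μ.ne_bot Q)] at h1
          exact hfin h1.symm
        have hνlt : ν.v (g %ₘ Q) < ν.v (Q * (g /ₘ Q)) := by
          rw [ν.map_mul, ← hc₀v, ← h1, μ.map_mul]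
          exact EReal.add_lt_add_of_lt_of_le' hQlt (hle _) (ν.ne_bot _)
            (fun _ h2 => (hμq₁ h2).elim)
        have hνg : ν.v g = ν.v (g %ₘ Q) := by
          conv_lhs => rw [← hgdec]
          exact v_add_lt ν hνlt
        exact absurd (le_trans (hle g) (le_of_eq hνg)) (not_le.2 hlt)
      -- part (b) : μ g ≤ w q₁ + ν Q
      have partb : μ.v g ≤ w (g /ₘ Q) + ν.v Q := by
        rcases eq_or_ne (w (g /ₘ Q)) ⊤ with htT | htT
        · rw [htT, EReal.top_add_of_ne_bot (ν.ne_bot Q)]; exact le_top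
        rcases eq_or_ne (ν.v Q) ⊤ with hβT | hβT
        · rw [hβT, EReal.add_top_of_ne_bot htb]; exact le_top
        by_contra hlt
        push_neg at hlt
        have h1 : μ.v (Q * (g /ₘ Q)) < w (g /ₘ Q) + ν.v Q := by
          have h4 := EReal.add_lt_add_of_lt_of_le hQlt iht (μ.ne_bot _) htT
          rw [μ.map_mul, add_comm (w (g /ₘ Q)) (ν.v Q)]
          exact h4
        have h2 : μ.v (g %ₘ Q) < w (g /ₘ Q) + ν.v Q := by
          have h3 : μ.v (-(Q * (g /ₘ Q)) + g) = μ.v (-(Q * (g /ₘ Q))) :=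
            v_add_lt μ (by rw [v_neg]; exact h1.trans hlt)
          have h4 : -(Q * (g /ₘ Q)) + g = g %ₘ Q := by linear_combination -hgdec
          rw [h4, v_neg] at h3
          rw [h3]; exact h1
        have h5 : w (g /ₘ Q) + ν.v Q ≤ ν.v (g %ₘ Q) := by
          have h6 : w (g /ₘ Q) ≤ ν.v (g /ₘ Q) := w_le_v hQm hQ1 hw _
          have h7 : w (g /ₘ Q) + ν.v Q ≤ ν.v (Q * (g /ₘ Q)) := by
            rw [ν.map_mul, add_comm (w (g /ₘ Q)) (ν.v Q)]
            exact add_le_add_right h6 _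
          have h8 := ν.add_ge g (-(Q * (g /ₘ Q)))
          rw [v_neg] at h8
          have h9 : g + -(Q * (g /ₘ Q)) = g %ₘ Q := by linear_combination -hgdec
          rw [h9] at h8
          exact le_trans (le_min (le_trans hlt.le (hle g)) h7) h8
        rw [← hc₀v] at h5
        exact absurd h5 (not_le.2 h2)
      -- conclude
      rw [w_formula hQm hQ1 hw hg]
      apply Finset.le_inf
      intro j hj
      match j with
      | 0 =>
          have he : ecoeff Q 0 g * Q ^ 0 = g %ₘ Q := by
            show (g %ₘ Q) * Q ^ 0 = g %ₘ Q
            rw [pow_zero, mul_one]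
          rw [he]
          exact parta
      | (k+1) =>
          have hk : k ∈ Finset.range (n+1) := by
            simp only [Finset.mem_range] at hj ⊢; omega
          have hwq : w (g /ₘ Q) = (Finset.range (n+1)).inf
              (fun i => ν.v (ecoeff Q i (g /ₘ Q) * Q ^ i)) :=
            w_formula hQm hQ1 hw (le_trans hq₁n (by omega))
          have h10 : w (g /ₘ Q) ≤ ν.v (ecoeff Q k (g /ₘ Q) * Q ^ k) := by
            rw [hwq]; exact Finset.inf_le hk
          have h11 : ecoeff Q (k+1) g * Q ^ (k+1) = (ecoeff Q k (g /ₘ Q) * Q ^ k) * Q := by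
            show ecoeff Q k (g /ₘ Q) * Q ^ (k+1) = _
            rw [pow_succ, mul_assoc]
          calc μ.v g ≤ w (g /ₘ Q) + ν.v Q := partb
          _ ≤ ν.v (ecoeff Q k (g /ₘ Q) * Q ^ k) + ν.v Q := add_le_add_left h10 _
          _ = ν.v (ecoeff Q (k+1) g * Q ^ (k+1)) := by rw [h11]; exact (ν.map_mul _ _).symm

end Main


noncomputable def shiftExp (Q r q : Polynomial K) : ℕ → Polynomial K
  | 0 => r
  | (k+1) => ecoeff Q k q

lemma shiftExp_sum {Q : Polynomial K} (hQm : Q.Monic) (hQ1 : 1 ≤ Q.natDegree)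
    (r q : Polynomial K) {n : ℕ} (hn : q.natDegree ≤ n) :
    ∑ j ∈ Finset.range (n+2), shiftExp Q r q j * Q ^ j = q * Q + r := by
  rw [Finset.sum_range_succ']
  have hterm : ∀ j, shiftExp Q r q (j+1) * Q ^ (j+1) = (ecoeff Q j q * Q ^ j) * Q := by
    intro j
    show ecoeff Q j q * Q ^ (j+1) = _
    rw [pow_succ, mul_assoc]
  rw [Finset.sum_congr rfl (fun j _ => hterm j), ← Finset.sum_mul, ← ecoeff_sum hQm hQ1 n q hn]
  show q * Q + r * Q ^ 0 = q * Q + r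
  rw [pow_zero, mul_one]

lemma shiftExp_deg {Q : Polynomial K} (hQm : Q.Monic) {r : Polynomial K}
    (hr : r.degree < Q.degree) (q : Polynomial K) (j : ℕ) :
    (shiftExp Q r q j).degree < Q.degree := by
  match j with
  | 0 => exact hr
  | (k+1) => exact ecoeff_degree hQm k q

end Stmt12Aux

open Stmt12Aux

/-- Let `μ < ν` be valuations on `K[y]` with the strictly positive
values of `μ` well-ordered, `Q ∈ Φ_μ(ν)` with `ν(Q) = β_μ(ν)`, and `ν_Q` the
truncation of `ν` with respect to `Q`.  If `f` satisfies `ν_Q(f) = μ(f) < ∞` and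
`f = qQ + r` is the Euclidean division of `f` by `Q` (`deg r < deg Q`), then
`ν_Q(f) = ν_Q(r)` and `ν_Q(r) < ν_Q(qQ)`. -/
theorem truncation_euclidean_division
    (μ ν : PolyValuation K)
    (hle : ∀ f : Polynomial K, μ.v f ≤ ν.v f) (hne : μ.v ≠ ν.v)
    (hwf : PosValuesWF μ)
    (Q : Polynomial K) (hQ : Q ∈ Phi μ ν) (hQval : ν.v Q = betaMN μ ν)
    (w : Polynomial K → EReal) (hw : IsTruncation ν Q w)
    (f : Polynomial K) (hf : w f = μ.v f) (hffin : μ.v f ≠ ⊤)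
    (q r : Polynomial K) (hdiv : f = q * Q + r) (hr : r.degree < Q.degree) :
    w f = w r ∧ w r < w (q * Q) := by
  obtain ⟨hQm, hQd, hQlt⟩ := hQ
  have hQ1 : 1 ≤ Q.natDegree := by
    by_contra hc
    push_neg at hc
    have hS : dmn μ ν ∈ {n : ℕ | ∃ f : Polynomial K, f.Monic ∧ f.natDegree = n ∧ μ.v f < ν.v f} :=
      Nat.sInf_mem ⟨Q.natDegree, Q, hQm, rfl, hQlt⟩
    obtain ⟨f₀, hf₀m, hf₀d, hf₀lt⟩ := hS
    have hone : f₀ = 1 := hf₀m.natDegree_eq_zero.1 (by omega)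
    rw [hone, μ.map_one, ν.map_one] at hf₀lt
    exact lt_irrefl _ hf₀lt
  have hE : ∀ j ≤ q.natDegree + 1, (shiftExp Q r q j).degree < Q.degree :=
    fun j _ => shiftExp_deg hQm hr q j
  have hE0 : ∀ j ≤ q.natDegree + 1, (shiftExp Q 0 q j).degree < Q.degree := by
    intro j _
    refine shiftExp_deg hQm ?_ q j
    rw [degree_zero, degree_eq_natDegree hQm.ne_zero]
    exact WithBot.bot_lt_coe _
  have hsumf : f = ∑ j ∈ Finset.range (q.natDegree+2), shiftExp Q r q j * Q ^ j := by
    rw [shiftExp_sum hQm hQ1 r q le_rfl, hdiv]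
  have hsumqQ : q * Q = ∑ j ∈ Finset.range (q.natDegree+2), shiftExp Q 0 q j * Q ^ j := by
    rw [shiftExp_sum hQm hQ1 0 q le_rfl, add_zero]
  have hwf' : w f = (Finset.range (q.natDegree+2)).inf
      (fun j => ν.v (shiftExp Q r q j * Q ^ j)) :=
    hw f (q.natDegree+1) _ hE hsumf
  have hwqQ : w (q * Q) = (Finset.range (q.natDegree+2)).inf
      (fun j => ν.v (shiftExp Q 0 q j * Q ^ j)) :=
    hw (q*Q) (q.natDegree+1) _ hE0 hsumqQ
  have hwr : w r = ν.v r := by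
    have h2 := hw r 0 (fun _ => r) (fun j _ => hr) (by simp)
    simpa [Finset.range_one] using h2
  have hsmall : ∀ p : Polynomial K, p.degree < Q.degree → μ.v p = ν.v p :=
    fun p hp => v_eq_of_deg_lt hle hQd p hp
  have hwf_min : w f = min (ν.v r) (w (q * Q)) := by
    apply le_antisymm
    · apply le_min
      · rw [hwf']
        refine le_trans (Finset.inf_le (Finset.mem_range.2 (by omega) : 0 ∈ Finset.range (q.natDegree+2))) ?_
        show ν.v (r * Q ^ 0) ≤ ν.v r
        rw [pow_zero, mul_one]
      · rw [hwf', hwqQ]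
        apply Finset.inf_mono_fun
        intro j hj
        match j with
        | 0 =>
            show ν.v (r * Q ^ 0) ≤ ν.v ((0:Polynomial K) * Q ^ 0)
            rw [zero_mul, ν.map_zero]; exact le_top
        | (k+1) => exact le_rfl
    · rw [hwf']
      apply Finset.le_inf
      intro j hj
      match j, hj with
      | 0, _ =>
          refine le_trans (min_le_left _ _) ?_
          show ν.v r ≤ ν.v (r * Q ^ 0)
          rw [pow_zero, mul_one]
      | (k+1), hj =>
          refine le_trans (min_le_right _ _) ?_
          rw [hwqQ]
          have h := Finset.inf_le (f := fun j => ν.v (shiftExp Q 0 q j * Q ^ j)) hj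
          exact h
  have hAM : ν.v r < w (q * Q) := by
    by_contra hc
    push_neg at hc
    have hwfM : w f = w (q * Q) := by rw [hwf_min, min_eq_right hc]
    have hμfM : μ.v f = w (q * Q) := by rw [← hf, hwfM]
    have hMT : w (q * Q) ≠ ⊤ := by rw [← hμfM]; exact hffin
    obtain ⟨j₀, hj₀, hMe⟩ := Finset.exists_mem_eq_inf (Finset.range (q.natDegree+2)) ⟨0, by simp⟩
      (fun j => ν.v (shiftExp Q 0 q j * Q ^ j))
    rw [← hwqQ] at hMe
    match j₀, hj₀, hMe with
    | 0, _, hMe =>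
        rw [show shiftExp Q 0 q 0 * Q ^ 0 = 0 by simp [shiftExp], ν.map_zero] at hMe
        exact hMT hMe
    | (k+1), hj₀, hMe =>
        have hsplit : shiftExp Q 0 q (k+1) * Q ^ (k+1) = (ecoeff Q k q * Q ^ k) * Q := by
          show ecoeff Q k q * Q ^ (k+1) = _
          rw [pow_succ, mul_assoc]
        rw [hsplit, ν.map_mul] at hMe
        have hXT : ν.v (ecoeff Q k q * Q ^ k) ≠ ⊤ := by
          intro h
          rw [h, EReal.top_add_of_ne_bot (ν.ne_bot Q)] at hMe
          exact hMT hMe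
        have hμq : μ.v q ≤ w q := mu_le_w hle hQm hQ1 hQd hQlt hw q
        have hwqle : w q ≤ ν.v (ecoeff Q k q * Q ^ k) := by
          rw [w_formula hQm hQ1 hw (le_refl q.natDegree)]
          refine Finset.inf_le (Finset.mem_range.2 ?_)
          have hk2 := Finset.mem_range.1 hj₀
          omega
        have hlt2 : μ.v (q * Q) < w (q * Q) := by
          rw [μ.map_mul, hMe, add_comm (μ.v q) (μ.v Q),
            add_comm (ν.v (ecoeff Q k q * Q ^ k)) (ν.v Q)]
          exact EReal.add_lt_add_of_lt_of_le hQlt (le_trans hμq hwqle) (μ.ne_bot q) hXT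
        have hlt3 : μ.v (q * Q) < μ.v r := by
          rw [hsmall r hr]; exact lt_of_lt_of_le hlt2 hc
        have hμf2 : μ.v f = μ.v (q * Q) := by rw [hdiv]; exact v_add_lt μ hlt3
        rw [hμfM] at hμf2
        exact absurd hμf2.symm (ne_of_lt hlt2)
  constructor
  · rw [hwf_min, min_eq_left hAM.le, hwr]
  · rw [hwr]; exact hAM
end

section
/- Let K be a field and let μ < ν be valuations on K[y] such that the set of strictly positive values taken by μ is well-ordered. Let Q ∈ Φ_μ(ν) with ν(Q) = β_μ(ν) and let ν_Q be the truncation of ν with respect to Q. Let Q' be a monic polynomial of minimal degree among monic polynomials P ∈ K[y] with ν_Q(P) < ν(P). Then the Q-expansion of Q' has the form Q' = Q^s + a_{s−1}Q^{s−1} + ⋯ + a_1 Q + a_0 (i.e., its top Q-coefficient equals 1), and ν_Q(Q') = s·β_μ(ν) = ν(a_0). -/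
open Polynomial

variable {K : Type*} [Field K]

namespace S13

lemma ereal_add_self {a : EReal} (hb : a ≠ ⊥) (h : a + a = 0) : a = 0 := by
  induction a with
  | bot => exact absurd rfl hb
  | coe r => norm_cast at h ⊢; linarith
  | top => simp at h

lemma add_lt_left (c : EReal) (hct : c ≠ ⊤) (hcb : c ≠ ⊥) {a b : EReal} (h : a < b) :
    c + a < c + b := by
  lift c to ℝ using ⟨hct, hcb⟩
  exact EReal.add_lt_add_left_coe h _

lemma add_lt_right (c : EReal) (hct : c ≠ ⊤) (hcb : c ≠ ⊥) {a b : EReal} (h : a < b) :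
    a + c < b + c := by
  lift c to ℝ using ⟨hct, hcb⟩
  exact EReal.add_lt_add_right_coe h _

lemma add_lt_cancel_right (c : EReal) {a b : EReal} (h : a + c < b + c) : a < b := by
  by_contra hc
  push_neg at hc
  exact absurd h (not_lt.2 (add_le_add_left hc c))

lemma vC_ne_top (ν : PolyValuation K) {c : K} (hc : c ≠ 0) : ν.v (C c) ≠ ⊤ := by
  intro h
  have h0 : ν.v (C c) + ν.v (C c⁻¹) = 0 := by
    rw [← ν.map_mul, ← C_mul, mul_inv_cancel₀ hc, C_1, ν.map_one]
  rw [h, EReal.top_add_of_ne_bot (ν.ne_bot _)] at h0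
  exact absurd h0 (by simp)

lemma v_neg (ν : PolyValuation K) (x : Polynomial K) : ν.v (-x) = ν.v x := by
  have h1 : ν.v (-1 : Polynomial K) = 0 := by
    apply ereal_add_self (ν.ne_bot _)
    rw [← ν.map_mul]
    norm_num
    exact ν.map_one
  rw [← neg_one_mul, ν.map_mul, h1, zero_add]

lemma v_add_lt (ν : PolyValuation K) {x y : Polynomial K} (h : ν.v x < ν.v y) :
    ν.v (x + y) = ν.v x := by
  have h1 : ν.v x ≤ ν.v (x + y) := by
    have := ν.add_ge x y
    rwa [min_eq_left h.le] at this
  refine le_antisymm ?_ h1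
  have h2 : min (ν.v (x + y)) (ν.v y) ≤ ν.v x := by
    have := ν.add_ge (x + y) (-y)
    rwa [add_neg_cancel_right, v_neg] at this
  rcases le_or_gt (ν.v (x + y)) (ν.v x) with h3 | h3
  · exact h3
  · exact absurd h2 (not_le.2 (lt_min h3 h))

lemma v_sum_le (ν : PolyValuation K) {ι : Type*} (s : Finset ι) (f : ι → Polynomial K) :
    s.inf (fun i => ν.v (f i)) ≤ ν.v (∑ i ∈ s, f i) := by
  induction s using Finset.cons_induction with
  | empty => simp [ν.map_zero]
  | cons a s ha ih =>
      rw [Finset.sum_cons, Finset.inf_cons]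
      exact le_trans (inf_le_inf le_rfl ih) (ν.add_ge _ _)

lemma v_pow (ν : PolyValuation K) (x : Polynomial K) (k : ℕ) :
    ν.v (x ^ k) = k • ν.v x := by
  induction k with
  | zero => simp [ν.map_one]
  | succ n ih => rw [pow_succ, ν.map_mul, ih, succ_nsmul]

lemma const_eq (μ ν : PolyValuation K) (hle : ∀ f, μ.v f ≤ ν.v f) (c : K) :
    μ.v (C c) = ν.v (C c) := by
  rcases eq_or_ne c 0 with rfl | hc
  · rw [C_0, μ.map_zero, ν.map_zero]
  · have hm : μ.v (C c) + μ.v (C c⁻¹) = 0 := by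
      rw [← μ.map_mul, ← C_mul, mul_inv_cancel₀ hc, C_1, μ.map_one]
    have hn : ν.v (C c) + ν.v (C c⁻¹) = 0 := by
      rw [← ν.map_mul, ← C_mul, mul_inv_cancel₀ hc, C_1, ν.map_one]
    have h1 : μ.v (C c) ≤ ν.v (C c) := hle _
    have h2 : μ.v (C c⁻¹) ≤ ν.v (C c⁻¹) := hle _
    have hnt : ν.v (C c) ≠ ⊤ := vC_ne_top ν hc
    have hnt' : ν.v (C c⁻¹) ≠ ⊤ := vC_ne_top ν (inv_ne_zero hc)
    lift ν.v (C c) to ℝ using ⟨hnt, ν.ne_bot _⟩ with a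
    lift ν.v (C c⁻¹) to ℝ using ⟨hnt', ν.ne_bot _⟩ with b
    lift μ.v (C c) to ℝ using ⟨ne_top_of_le_ne_top (EReal.coe_ne_top a) h1, μ.ne_bot _⟩ with a'
    lift μ.v (C c⁻¹) to ℝ using ⟨ne_top_of_le_ne_top (EReal.coe_ne_top b) h2, μ.ne_bot _⟩ with b'
    norm_cast at h1 h2 hm hn ⊢
    linarith

lemma small_eq (μ ν : PolyValuation K) (hle : ∀ f, μ.v f ≤ ν.v f)
    (g : Polynomial K) (hg : g.natDegree < dmn μ ν) : μ.v g = ν.v g := by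
  rcases eq_or_ne g 0 with rfl | hg0
  · rw [μ.map_zero, ν.map_zero]
  · have hlc : g.leadingCoeff ≠ 0 := leadingCoeff_ne_zero.2 hg0
    set m := g * C (g.leadingCoeff)⁻¹ with hm
    have hmon : m.Monic := monic_mul_leadingCoeff_inv hg0
    have hdeg : m.natDegree = g.natDegree := by
      rw [hm, natDegree_mul hg0 (by simp [inv_ne_zero hlc]), natDegree_C, add_zero]
    have heq : μ.v m = ν.v m := by
      refine le_antisymm (hle m) (not_lt.1 fun hlt => ?_)
      have hmem : m.natDegree ∈
          {n : ℕ | ∃ f : Polynomial K, f.Monic ∧ f.natDegree = n ∧ μ.v f < ν.v f} :=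
        ⟨m, hmon, rfl, hlt⟩
      have hd : dmn μ ν ≤ m.natDegree := Nat.sInf_le hmem
      omega
    have hg' : g = m * C g.leadingCoeff := by
      rw [hm, mul_assoc, ← C_mul, inv_mul_cancel₀ hlc, C_1, mul_one]
    have e1 : μ.v g = μ.v m + μ.v (C g.leadingCoeff) := by
      conv_lhs => rw [hg']
      rw [μ.map_mul]
    have e2 : ν.v g = ν.v m + ν.v (C g.leadingCoeff) := by
      conv_lhs => rw [hg']
      rw [ν.map_mul]
    rw [e1, e2, heq, const_eq μ ν hle]


lemma lemmaM (μ ν : PolyValuation K) (hle : ∀ f, μ.v f ≤ ν.v f)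
    (Q : Polynomial K) (hQmon : Q.Monic) (hQd : Q.natDegree = dmn μ ν)
    (hQlt : μ.v Q < ν.v Q)
    (x z : Polynomial K) (hx0 : x ≠ 0) (hz0 : z ≠ 0)
    (hxd : x.natDegree < Q.natDegree) (hzd : z.natDegree < Q.natDegree)
    (hxt : ν.v x ≠ ⊤) (hzt : ν.v z ≠ ⊤) :
    ν.v ((x * z) %ₘ Q) = ν.v x + ν.v z ∧
      ν.v x + ν.v z < ν.v (Q * ((x * z) /ₘ Q)) := by
  set q := (x * z) /ₘ Q with hq_def
  set r := (x * z) %ₘ Q with hr_def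
  have hid : r + Q * q = x * z := modByMonic_add_div _ Q
  have hVt : ν.v x + ν.v z ≠ ⊤ := by
    lift ν.v x to ℝ using ⟨hxt, ν.ne_bot x⟩ with vx
    lift ν.v z to ℝ using ⟨hzt, ν.ne_bot z⟩ with vz
    exact_mod_cast EReal.coe_ne_top _
  have hνxz : ν.v (x * z) = ν.v x + ν.v z := ν.map_mul x z
  have hμxz : μ.v (x * z) = ν.v x + ν.v z := by
    rw [μ.map_mul, small_eq μ ν hle x (by omega), small_eq μ ν hle z (by omega)]
  have hqdeg : q.natDegree < Q.natDegree := by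
    rw [hq_def, natDegree_divByMonic _ hQmon, natDegree_mul hx0 hz0]
    omega
  have hrdeg : r.natDegree < Q.natDegree := by
    rcases eq_or_ne r 0 with h0 | h0
    · rw [h0, natDegree_zero]; omega
    · exact natDegree_lt_natDegree h0 (degree_modByMonic_lt _ hQmon)
  -- main claim: ν (Q*q) > νx + νz
  have hkey : ν.v x + ν.v z < ν.v (Q * q) := by
    rcases lt_or_ge (ν.v x + ν.v z) (ν.v (Q * q)) with h | hc
    · exact h
    -- derive contradiction from hc : ν (Q*q) ≤ V
    exfalso
    have hq0 : q ≠ 0 := by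
      intro h0
      rw [h0, mul_zero, ν.map_zero] at hc
      exact hVt (top_le_iff.1 hc)
    have hqt : ν.v q ≠ ⊤ := by
      intro h0
      rw [ν.map_mul, h0, add_comm, EReal.top_add_of_ne_bot (ν.ne_bot Q)] at hc
      exact hVt (top_le_iff.1 hc)
    have hμq : μ.v q = ν.v q := small_eq μ ν hle q (by omega)
    have h1 : μ.v (Q * q) < ν.v (Q * q) := by
      rw [μ.map_mul, ν.map_mul, hμq]
      exact add_lt_right (ν.v q) hqt (ν.ne_bot q) hQlt
    rcases le_or_gt (ν.v (Q * q)) (ν.v r) with hle2 | hlt2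
    · have hμr : μ.v r = ν.v r := small_eq μ ν hle r (by omega)
      have h3 : μ.v (Q * q) < μ.v r := by
        rw [hμr]; exact lt_of_lt_of_le h1 hle2
      have h4 : μ.v (x * z) = μ.v (Q * q) := by
        rw [← hid, add_comm r (Q * q)]
        exact v_add_lt μ h3
      rw [hμxz] at h4
      have h5 : ν.v x + ν.v z < ν.v (Q * q) := by rw [h4]; exact h1
      exact absurd hc (not_le.2 h5)
    · have h4 : ν.v (x * z) = ν.v r := by
        rw [← hid]; exact v_add_lt ν hlt2
      rw [hνxz] at h4
      exact absurd hc (not_le.2 (h4 ▸ hlt2))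
  refine ⟨?_, hkey⟩
  have hrle : ν.v r ≤ ν.v x + ν.v z := by
    by_contra hcon
    push_neg at hcon
    have := ν.add_ge r (Q * q)
    rw [hid, hνxz] at this
    exact absurd this (not_le.2 (lt_min hcon hkey))
  have h5 : ν.v (x * z) = ν.v r := by
    rw [← hid]; exact v_add_lt ν (lt_of_le_of_lt hrle hkey)
  rw [← h5, hνxz]


lemma expansion_exists (Q : Polynomial K) (hQmon : Q.Monic) (hd : 1 ≤ Q.natDegree)
    (g : Polynomial K) :
    ∃ (n : ℕ) (c : ℕ → Polynomial K), (∀ j, (c j).degree < Q.degree) ∧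
      g = ∑ j ∈ Finset.range (n + 1), c j * Q ^ j := by
  have hQ0 : Q ≠ 0 := hQmon.ne_zero
  have hQdeg : (0 : WithBot ℕ) < Q.degree := by
    rw [degree_eq_natDegree hQ0]
    exact_mod_cast hd
  suffices H : ∀ N (g : Polynomial K), g.natDegree < N →
      ∃ (n : ℕ) (c : ℕ → Polynomial K), (∀ j, (c j).degree < Q.degree) ∧
        g = ∑ j ∈ Finset.range (n + 1), c j * Q ^ j by
    exact H (g.natDegree + 1) g (Nat.lt_succ_self _)
  intro N
  induction N with
  | zero => intro g hg; omega
  | succ N ih =>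
      intro g hg
      rcases lt_or_ge g.degree Q.degree with hlow | hhigh
      · refine ⟨0, fun j => if j = 0 then g else 0, fun j => ?_, by simp⟩
        by_cases hj : j = 0
        · simpa [hj] using hlow
        · simpa [hj] using lt_of_le_of_lt bot_le hQdeg
      · have hg0 : g ≠ 0 := by
          intro h0
          rw [h0, degree_zero] at hhigh
          exact absurd (lt_of_lt_of_le hQdeg hhigh) (by simp)
        have hgd : Q.natDegree ≤ g.natDegree := natDegree_le_natDegree hhigh
        have hqd : (g /ₘ Q).natDegree < N := by
          rw [natDegree_divByMonic _ hQmon]; omega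
        obtain ⟨n, c, hc, hsum⟩ := ih (g /ₘ Q) hqd
        refine ⟨n + 1, fun j => if j = 0 then g %ₘ Q else c (j - 1), fun j => ?_, ?_⟩
        · by_cases hj : j = 0
          · simpa [hj] using degree_modByMonic_lt g hQmon
          · simpa [hj] using hc (j - 1)
        · have hgid : g = g %ₘ Q + Q * (g /ₘ Q) := (modByMonic_add_div g Q).symm
          rw [Finset.sum_range_succ' _ (n + 1)]
          simp only [Nat.succ_ne_zero, if_false, Nat.add_sub_cancel, if_true, pow_zero, mul_one]
          conv_lhs => rw [hgid]
          rw [hsum, Finset.mul_sum, add_comm (g %ₘ Q) _]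
          congr 1
          refine Finset.sum_congr rfl fun j _ => ?_
          ring
lemma expansion_degree (Q : Polynomial K) (hQmon : Q.Monic) (hd : 1 ≤ Q.natDegree)
    (b : ℕ → Polynomial K) (t : ℕ) (hdeg : ∀ j, (b j).degree < Q.degree) (hbt : b t ≠ 0) :
    (∑ j ∈ Finset.range (t + 1), b j * Q ^ j).degree
        = ((t * Q.natDegree + (b t).natDegree : ℕ) : WithBot ℕ)
    ∧ (∑ j ∈ Finset.range (t + 1), b j * Q ^ j).leadingCoeff = (b t).leadingCoeff := by
  have hQ0 : Q ≠ 0 := hQmon.ne_zero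
  have hterm : ∀ j, b j ≠ 0 → (b j * Q ^ j).degree = (((b j).natDegree + j * Q.natDegree : ℕ) : WithBot ℕ) := by
    intro j hj
    have hne : b j * Q ^ j ≠ 0 := mul_ne_zero hj (pow_ne_zero _ hQ0)
    rw [degree_eq_natDegree hne, natDegree_mul hj (pow_ne_zero _ hQ0), natDegree_pow]
  have htop : (b t * Q ^ t).degree = ((t * Q.natDegree + (b t).natDegree : ℕ) : WithBot ℕ) := by
    rw [hterm t hbt]; congr 1; ring
  have hrest : (∑ j ∈ Finset.range t, b j * Q ^ j).degree < ((t * Q.natDegree : ℕ) : WithBot ℕ) := by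
    refine lt_of_le_of_lt (degree_sum_le _ _) ?_
    rw [Finset.sup_lt_iff (by exact_mod_cast WithBot.bot_lt_coe (t * Q.natDegree) : (⊥ : WithBot ℕ) < ((t * Q.natDegree : ℕ) : WithBot ℕ))]
    intro j hj
    rcases eq_or_ne (b j) 0 with h0 | h0
    · simp only [h0, zero_mul, degree_zero]; exact WithBot.bot_lt_coe _
    · rw [hterm j h0]
      have hbd : (b j).natDegree < Q.natDegree := natDegree_lt_natDegree h0 (hdeg j)
      have hjt : j + 1 ≤ t := Finset.mem_range.1 hj
      have h2 : j * Q.natDegree + Q.natDegree ≤ t * Q.natDegree := by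
        calc j * Q.natDegree + Q.natDegree = (j + 1) * Q.natDegree := by ring
        _ ≤ t * Q.natDegree := Nat.mul_le_mul_right _ hjt
      have h3 : (b j).natDegree + j * Q.natDegree < t * Q.natDegree := by omega
      exact_mod_cast h3
  have hlt : (∑ j ∈ Finset.range t, b j * Q ^ j).degree < (b t * Q ^ t).degree := by
    rw [htop]
    exact lt_of_lt_of_le hrest (by exact_mod_cast Nat.le_add_right _ _)
  rw [Finset.sum_range_succ]
  constructor
  · rw [degree_add_eq_right_of_degree_lt hlt, htop]
  · rw [leadingCoeff_add_of_degree_lt hlt, leadingCoeff_mul, (hQmon.pow t).leadingCoeff, mul_one]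


-- IsTruncation copy within namespace usage: we take hw as the raw statement
lemma master (ν : PolyValuation K)
    (Q : Polynomial K) (hQmon : Q.Monic) (hd : 1 ≤ Q.natDegree)
    (w : Polynomial K → EReal)
    (hw : ∀ (g : Polynomial K) (s : ℕ) (c : ℕ → Polynomial K),
      (∀ j ≤ s, (c j).degree < Q.degree) →
      g = ∑ j ∈ Finset.range (s + 1), c j * Q ^ j →
      w g = Finset.inf (Finset.range (s + 1)) (fun j => ν.v (c j * Q ^ j)))
    (Q' : Polynomial K)
    (hQ'min : ∀ P : Polynomial K, P.Monic → w P < ν.v P → Q'.natDegree ≤ P.natDegree)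
    (b : ℕ → Polynomial K) (t : ℕ)
    (hdeg : ∀ j, (b j).degree < Q.degree) (hbt : b t ≠ 0)
    (hlt : w (∑ j ∈ Finset.range (t + 1), b j * Q ^ j)
        < ν.v (∑ j ∈ Finset.range (t + 1), b j * Q ^ j)) :
    Q'.natDegree ≤ t * Q.natDegree + (b t).natDegree := by
  set X := ∑ j ∈ Finset.range (t + 1), b j * Q ^ j with hX
  obtain ⟨hXdeg, hXlc⟩ := expansion_degree Q hQmon hd b t hdeg hbt
  rw [← hX] at hXdeg hXlc
  have hX0 : X ≠ 0 := by
    intro h0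
    rw [h0, degree_zero] at hXdeg
    exact absurd hXdeg (by exact_mod_cast WithBot.bot_ne_coe)
  have hlc0 : (b t).leadingCoeff ≠ 0 := leadingCoeff_ne_zero.2 hbt
  set u := ((b t).leadingCoeff)⁻¹ with hu_def
  have hu : u ≠ 0 := inv_ne_zero hlc0
  set P := C u * X with hP
  have hPmon : P.Monic := by
    rw [Monic, hP, leadingCoeff_mul, leadingCoeff_C, hXlc, hu_def,
      inv_mul_cancel₀ hlc0]
  have hexp : P = ∑ j ∈ Finset.range (t + 1), (C u * b j) * Q ^ j := by
    rw [hP, hX, Finset.mul_sum]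
    exact Finset.sum_congr rfl fun j _ => (mul_assoc _ _ _).symm
  have hdeg' : ∀ j ≤ t, (C u * b j).degree < Q.degree := by
    intro j _
    refine lt_of_le_of_lt ?_ (hdeg j)
    calc (C u * b j).degree ≤ (C u).degree + (b j).degree := degree_mul_le _ _
    _ ≤ 0 + (b j).degree := add_le_add_left degree_C_le _
    _ = (b j).degree := zero_add _
  have hwP := hw P t _ hdeg' hexp
  have hwX := hw X t b (fun j _ => hdeg j) hX
  obtain ⟨j₀, hj₀mem, hj₀⟩ := Finset.exists_mem_eq_inf (Finset.range (t + 1))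
    ⟨0, Finset.mem_range.2 (Nat.succ_pos t)⟩ (fun j => ν.v (b j * Q ^ j))
  have hCu_t : ν.v (C u) ≠ ⊤ := vC_ne_top ν hu
  have hwP_le : w P ≤ ν.v (C u) + w X := by
    rw [hwP, hwX, hj₀]
    refine le_trans (Finset.inf_le hj₀mem) ?_
    rw [mul_assoc, ν.map_mul]
  have hwPlt : w P < ν.v P := by
    refine lt_of_le_of_lt hwP_le ?_
    rw [hP, ν.map_mul]
    exact add_lt_left _ hCu_t (ν.ne_bot _) hlt
  have hfin := hQ'min P hPmon hwPlt
  have hPdeg : P.natDegree = X.natDegree := by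
    rw [hP, natDegree_mul (by simpa using hu) hX0, natDegree_C, zero_add]
  have hXnat : X.natDegree = t * Q.natDegree + (b t).natDegree :=
    natDegree_eq_of_degree_eq_some hXdeg
  omega

lemma small_ne_top (ν : PolyValuation K)
    (Q : Polynomial K) (hQmon : Q.Monic) (hd : 1 ≤ Q.natDegree)
    (w : Polynomial K → EReal)
    (hw : ∀ (g : Polynomial K) (s : ℕ) (c : ℕ → Polynomial K),
      (∀ j ≤ s, (c j).degree < Q.degree) →
      g = ∑ j ∈ Finset.range (s + 1), c j * Q ^ j →
      w g = Finset.inf (Finset.range (s + 1)) (fun j => ν.v (c j * Q ^ j)))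
    (Q' : Polynomial K)
    (hQ'min : ∀ P : Polynomial K, P.Monic → w P < ν.v P → Q'.natDegree ≤ P.natDegree)
    (hQ'big : Q.natDegree < Q'.natDegree)
    (hQtop : ν.v Q ≠ ⊤)
    (g : Polynomial K) (hg0 : g ≠ 0) (hgd : g.natDegree < Q.natDegree) :
    ν.v g ≠ ⊤ := by
  intro hgt
  have hQ0 : Q ≠ 0 := hQmon.ne_zero
  set m := g * C (g.leadingCoeff)⁻¹ with hm
  have hmon : m.Monic := monic_mul_leadingCoeff_inv hg0
  set P := m * X ^ (Q.natDegree - g.natDegree) with hPdef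
  have hPmon : P.Monic := hmon.mul (monic_X_pow _)
  have hmdeg : m.natDegree = g.natDegree := by
    rw [hm, natDegree_mul hg0 (by simp [inv_ne_zero (leadingCoeff_ne_zero.2 hg0)]),
      natDegree_C, add_zero]
  have hPdeg : P.natDegree = Q.natDegree := by
    rw [hPdef, natDegree_mul hmon.ne_zero (pow_ne_zero _ X_ne_zero), natDegree_X_pow, hmdeg]
    omega
  have hmt : ν.v m = ⊤ := by
    rw [hm, ν.map_mul, hgt, EReal.top_add_of_ne_bot (ν.ne_bot _)]
  have hPt : ν.v P = ⊤ := by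
    rw [hPdef, ν.map_mul, hmt, EReal.top_add_of_ne_bot (ν.ne_bot _)]
  have hdegQ : Q.degree = (Q.natDegree : WithBot ℕ) := degree_eq_natDegree hQ0
  have hdeq : P.degree = Q.degree := by
    rw [hdegQ, degree_eq_natDegree hPmon.ne_zero, hPdeg]
  have hPQdeg : (P - Q).degree < Q.degree := by
    have h := degree_sub_lt hdeq hPmon.ne_zero
      (by rw [hPmon.leadingCoeff, hQmon.leadingCoeff])
    rwa [hdeq] at h
  have hPQle : ν.v (P - Q) ≤ ν.v Q := by
    have h1 := ν.add_ge P (-(P - Q))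
    rw [v_neg, (by ring : P + -(P - Q) = Q)] at h1
    rw [hPt, min_eq_right le_top] at h1
    exact h1
  -- expansion of P : P = (P-Q)*Q^0 + 1*Q^1
  set c : ℕ → Polynomial K := fun j => if j = 0 then P - Q else if j = 1 then 1 else 0 with hc
  have hcdeg : ∀ j ≤ 1, (c j).degree < Q.degree := by
    intro j hj
    interval_cases j
    · simpa [hc] using hPQdeg
    · simp only [hc, if_false, if_true, Nat.one_ne_zero]
      rw [degree_one, hdegQ]
      exact_mod_cast hd
  have hcsum : P = ∑ j ∈ Finset.range (1 + 1), c j * Q ^ j := by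
    rw [Finset.sum_range_succ, Finset.sum_range_succ, Finset.sum_range_zero, hc]
    simp
  have hwP := hw P 1 c hcdeg hcsum
  have hwPle : w P ≤ ν.v Q := by
    rw [hwP]
    refine le_trans (Finset.inf_le (show (0:ℕ) ∈ Finset.range (1+1) by simp)) ?_
    simp only [hc, if_true, pow_zero, mul_one]
    exact hPQle
  have : w P < ν.v P := by
    rw [hPt]
    exact lt_of_le_of_lt hwPle (lt_top_iff_ne_top.2 hQtop)
  have hfin := hQ'min P hPmon this
  rw [hPdeg] at hfin
  exact absurd hfin (not_le.2 hQ'big)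

end S13


theorem form_of_next_key_polynomial_aux
    (μ ν : PolyValuation K)
    (hle : ∀ f : Polynomial K, μ.v f ≤ ν.v f)
    (Q : Polynomial K) (hQmon : Q.Monic) (hQdmn : Q.natDegree = dmn μ ν)
    (hQlt : μ.v Q < ν.v Q)
    (w : Polynomial K → EReal)
    (hw : ∀ (g : Polynomial K) (s : ℕ) (c : ℕ → Polynomial K),
      (∀ j ≤ s, (c j).degree < Q.degree) →
      g = ∑ j ∈ Finset.range (s + 1), c j * Q ^ j →
      w g = Finset.inf (Finset.range (s + 1)) (fun j => ν.v (c j * Q ^ j)))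
    (Q' : Polynomial K) (hQ'monic : Q'.Monic) (hQ'lt : w Q' < ν.v Q')
    (hQ'min : ∀ P : Polynomial K, P.Monic → w P < ν.v P →
      Q'.natDegree ≤ P.natDegree) :
    ∃ (s : ℕ) (a : ℕ → Polynomial K),
      (∀ j ≤ s, (a j).degree < Q.degree) ∧
      Q' = Q ^ s + ∑ j ∈ Finset.range s, a j * Q ^ j ∧
      w Q' = s • (ν.v Q) ∧ w Q' = ν.v (a 0) := by
  classical
  have hd : 1 ≤ Q.natDegree := by
    by_contra hcon
    have hd0 : Q.natDegree = 0 := by omega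
    have hQ1 : Q = 1 := hQmon.natDegree_eq_zero.1 hd0
    rw [hQ1, μ.map_one, ν.map_one] at hQlt
    exact lt_irrefl _ hQlt
  have hQ0 : Q ≠ 0 := hQmon.ne_zero
  have hQ'0 : Q' ≠ 0 := hQ'monic.ne_zero
  have hQdegbot : (⊥ : WithBot ℕ) < Q.degree := by
    rw [degree_eq_natDegree hQ0]
    exact WithBot.bot_lt_coe _
  -- trimmed expansion of Q'
  obtain ⟨s, c0, hc0deg, hAs, hQ'sum⟩ :
      ∃ (s : ℕ) (c : ℕ → Polynomial K), (∀ j, (c j).degree < Q.degree) ∧ c s ≠ 0 ∧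
        Q' = ∑ j ∈ Finset.range (s + 1), c j * Q ^ j := by
    obtain ⟨n, c, hcdeg, hcsum⟩ := S13.expansion_exists Q hQmon hd Q'
    set T := (Finset.range (n + 1)).filter (fun j => c j ≠ 0) with hT
    have hTne : T.Nonempty := by
      rcases Finset.eq_empty_or_nonempty T with hemp | hne
      · exfalso
        apply hQ'0
        rw [hcsum]
        refine Finset.sum_eq_zero fun j hj => ?_
        have hc0 : c j = 0 := by
          by_contra hcc
          have hmem : j ∈ T := Finset.mem_filter.2 ⟨hj, hcc⟩
          rw [hemp] at hmem
          exact absurd hmem (Finset.notMem_empty j)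
        rw [hc0, zero_mul]
      · exact hne
    refine ⟨T.max' hTne, c, hcdeg, (Finset.mem_filter.1 (T.max'_mem hTne)).2, ?_⟩
    rw [hcsum]
    have hsub : Finset.range (T.max' hTne + 1) ⊆ Finset.range (n + 1) := by
      refine Finset.range_subset_range.2 ?_
      have := Finset.mem_range.1 (Finset.mem_filter.1 (T.max'_mem hTne)).1
      omega
    refine (Finset.sum_subset hsub fun j hj hnj => ?_).symm
    have hc0 : c j = 0 := by
      by_contra hcc
      have hjT : j ∈ T := Finset.mem_filter.2 ⟨hj, hcc⟩
      have h1 := Finset.le_max' T j hjT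
      have h2 : ¬ j < T.max' hTne + 1 := fun h => hnj (Finset.mem_range.2 h)
      omega
    rw [hc0, zero_mul]
  have hδ := hw Q' s c0 (fun j _ => hc0deg j) hQ'sum
  have hδtop : w Q' ≠ ⊤ := (lt_of_lt_of_le hQ'lt le_top).ne
  have hδbot : w Q' ≠ ⊥ := by
    obtain ⟨j₀, hj₀mem, hj₀⟩ := Finset.exists_mem_eq_inf (Finset.range (s + 1))
      ⟨0, Finset.mem_range.2 (Nat.succ_pos s)⟩ (fun j => ν.v (c0 j * Q ^ j))
    rw [hδ, hj₀]
    exact ν.ne_bot _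
  have hmin : ∀ j, j ≤ s → w Q' ≤ ν.v (c0 j * Q ^ j) := by
    intro j hj
    rw [hδ]
    exact Finset.inf_le (Finset.mem_range.2 (by omega))
  obtain ⟨hQ'degW, hQ'lcW⟩ := S13.expansion_degree Q hQmon hd c0 s hc0deg hAs
  rw [← hQ'sum] at hQ'degW hQ'lcW
  have hAsmon : (c0 s).Monic := by
    have h1 : Q'.leadingCoeff = 1 := hQ'monic
    rw [hQ'lcW] at h1
    exact h1
  have hQ'nat : Q'.natDegree = s * Q.natDegree + (c0 s).natDegree :=
    natDegree_eq_of_degree_eq_some hQ'degW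
  have hed : (c0 s).natDegree < Q.natDegree := natDegree_lt_natDegree hAs (hc0deg s)
  have hs1 : 1 ≤ s := by
    by_contra hcon
    have hs0 : s = 0 := by omega
    have h1 : w Q' = ν.v (c0 0 * Q ^ 0) := by
      rw [hδ, hs0]
      simp
    have h2 : Q' = c0 0 * Q ^ 0 := by
      rw [hQ'sum, hs0]
      simp
    have h3 : w Q' = ν.v Q' := by rw [h1, h2]
    rw [h3] at hQ'lt
    exact lt_irrefl _ hQ'lt
  -- Step 1 : the top index s is a minimizer
  have hSs : ν.v (c0 s * Q ^ s) = w Q' := by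
    obtain ⟨jx, hjxs, hjxval, hjxmax⟩ :
        ∃ jx, jx ≤ s ∧ ν.v (c0 jx * Q ^ jx) = w Q' ∧
          ∀ k ≤ s, ν.v (c0 k * Q ^ k) = w Q' → k ≤ jx := by
      set SS := (Finset.range (s + 1)).filter (fun j => ν.v (c0 j * Q ^ j) = w Q') with hSSdef
      have hne : SS.Nonempty := by
        obtain ⟨j₀, hj₀mem, hj₀⟩ := Finset.exists_mem_eq_inf (Finset.range (s + 1))
          ⟨0, Finset.mem_range.2 (Nat.succ_pos s)⟩ (fun j => ν.v (c0 j * Q ^ j))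
        exact ⟨j₀, Finset.mem_filter.2 ⟨hj₀mem, by rw [hδ, hj₀]⟩⟩
      refine ⟨SS.max' hne, ?_, ?_, ?_⟩
      · have := Finset.mem_range.1 (Finset.mem_filter.1 (SS.max'_mem hne)).1
        omega
      · exact (Finset.mem_filter.1 (SS.max'_mem hne)).2
      · intro k hk hkv
        exact Finset.le_max' SS k (Finset.mem_filter.2 ⟨Finset.mem_range.2 (by omega), hkv⟩)
    suffices hjs : jx = s by rw [← hjs]; exact hjxval
    by_contra hnej
    have hjx_lt : jx < s := by omega
    set b1 : ℕ → Polynomial K := fun j => if ν.v (c0 j * Q ^ j) = w Q' then c0 j else 0 with hb1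
    have hb1deg : ∀ j, (b1 j).degree < Q.degree := by
      intro j
      by_cases hcase : ν.v (c0 j * Q ^ j) = w Q'
      · simpa [hb1, hcase] using hc0deg j
      · simpa [hb1, hcase] using hQdegbot
    set X1 := ∑ j ∈ Finset.range (jx + 1), b1 j * Q ^ j with hX1
    have hb1jx : b1 jx = c0 jx := by rw [hb1]; simp [hjxval]
    have hb1jx0 : b1 jx ≠ 0 := by
      rw [hb1jx]
      intro h0
      rw [h0, zero_mul, ν.map_zero] at hjxval
      exact hδtop hjxval.symm
    have hX1ext : X1 = ∑ j ∈ Finset.range (s + 1), b1 j * Q ^ j := by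
      rw [hX1]
      refine Finset.sum_subset (Finset.range_subset_range.2 (by omega)) fun j hj hnj => ?_
      have hj2 : ¬ j < jx + 1 := fun h => hnj (Finset.mem_range.2 h)
      have hj3 : j < s + 1 := Finset.mem_range.1 hj
      have hb1j : b1 j = 0 := by
        rw [hb1]
        simp only []
        rw [if_neg]
        intro hv
        exact absurd (hjxmax j (by omega) hv) (by omega)
      rw [hb1j, zero_mul]
    have hdiff : w Q' < ν.v (Q' - X1) := by
      have hQX : Q' - X1 = ∑ j ∈ Finset.range (s + 1), (c0 j - b1 j) * Q ^ j := by
        rw [hX1ext]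
        conv_lhs => rw [hQ'sum]
        rw [← Finset.sum_sub_distrib]
        exact Finset.sum_congr rfl fun j _ => by ring
      rw [hQX]
      refine lt_of_lt_of_le ?_ (S13.v_sum_le ν _ _)
      rw [Finset.lt_inf_iff (lt_top_iff_ne_top.2 hδtop)]
      intro j hjmem
      by_cases hcase : ν.v (c0 j * Q ^ j) = w Q'
      · have hz : c0 j - b1 j = 0 := by rw [hb1]; simp [hcase]
        rw [hz, zero_mul, ν.map_zero]
        exact lt_top_iff_ne_top.2 hδtop
      · have hz : c0 j - b1 j = c0 j := by rw [hb1]; simp [hcase]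
        rw [hz]
        have := Finset.mem_range.1 hjmem
        exact lt_of_le_of_ne (hmin j (by omega)) (Ne.symm hcase)
    have hX1lt : w X1 < ν.v X1 := by
      have hX1v : w Q' < ν.v X1 := by
        have hXe : X1 = Q' + -(Q' - X1) := by ring
        rw [hXe]
        refine lt_of_lt_of_le ?_ (ν.add_ge _ _)
        rw [S13.v_neg]
        exact lt_min hQ'lt hdiff
      have hwX1 : w X1 ≤ w Q' := by
        rw [hw X1 jx b1 (fun j _ => hb1deg j) hX1]
        refine le_of_le_of_eq (Finset.inf_le (Finset.mem_range.2 (Nat.lt_succ_self jx))) ?_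
        rw [hb1jx, hjxval]
      exact lt_of_le_of_lt hwX1 hX1v
    have hmaster := S13.master ν Q hQmon hd w hw Q' hQ'min b1 jx hb1deg hb1jx0
      (by rw [← hX1]; exact hX1lt)
    have hb1d : (b1 jx).natDegree < Q.natDegree := natDegree_lt_natDegree hb1jx0 (hb1deg jx)
    have hmul : jx * Q.natDegree + Q.natDegree ≤ s * Q.natDegree := by
      have h1 : (jx + 1) * Q.natDegree ≤ s * Q.natDegree := Nat.mul_le_mul_right _ (by omega)
      rw [add_mul, one_mul] at h1
      exact h1
    omega
  -- finiteness facts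
  have hslot_top : ν.v (c0 s * Q ^ s) ≠ ⊤ := by rw [hSs]; exact hδtop
  have hAstop : ν.v (c0 s) ≠ ⊤ := by
    intro h
    exact hslot_top (by rw [ν.map_mul, h, EReal.top_add_of_ne_bot (ν.ne_bot _)])
  have hβtop : ν.v Q ≠ ⊤ := by
    intro h
    apply hslot_top
    obtain ⟨t, ht⟩ : ∃ t, s = t + 1 := ⟨s - 1, by omega⟩
    rw [ht, pow_succ, ← mul_assoc, ν.map_mul, h, add_comm,
      EReal.top_add_of_ne_bot (ν.ne_bot _)]
  have hQpow_top : ∀ k, ν.v (Q ^ k) ≠ ⊤ := by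
    intro k
    rw [S13.v_pow]
    lift ν.v Q to ℝ using ⟨hβtop, ν.ne_bot Q⟩ with βr
    rw [← EReal.coe_nsmul]
    exact EReal.coe_ne_top _
  -- Step 2 : the index 0 is a minimizer
  have hS0 : ν.v (c0 0 * Q ^ 0) = w Q' := by
    obtain ⟨j0, hj0s, hj0val, hj0min⟩ :
        ∃ j0, j0 ≤ s ∧ ν.v (c0 j0 * Q ^ j0) = w Q' ∧
          ∀ k ≤ s, ν.v (c0 k * Q ^ k) = w Q' → j0 ≤ k := by
      set SS := (Finset.range (s + 1)).filter (fun j => ν.v (c0 j * Q ^ j) = w Q') with hSSdef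
      have hne : SS.Nonempty := by
        obtain ⟨j₀, hj₀mem, hj₀⟩ := Finset.exists_mem_eq_inf (Finset.range (s + 1))
          ⟨0, Finset.mem_range.2 (Nat.succ_pos s)⟩ (fun j => ν.v (c0 j * Q ^ j))
        exact ⟨j₀, Finset.mem_filter.2 ⟨hj₀mem, by rw [hδ, hj₀]⟩⟩
      refine ⟨SS.min' hne, ?_, ?_, ?_⟩
      · have := Finset.mem_range.1 (Finset.mem_filter.1 (SS.min'_mem hne)).1
        omega
      · exact (Finset.mem_filter.1 (SS.min'_mem hne)).2
      · intro k hk hkv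
        exact Finset.min'_le SS k (Finset.mem_filter.2 ⟨Finset.mem_range.2 (by omega), hkv⟩)
    suffices hj00 : j0 = 0 by rw [← hj00]; exact hj0val
    by_contra h0ne
    have hj0pos : 1 ≤ j0 := by omega
    set t2 := s - j0 with ht2
    set b2 : ℕ → Polynomial K := fun j => c0 (j + j0) with hb2
    have hb2deg : ∀ j, (b2 j).degree < Q.degree := fun j => hc0deg _
    have hb2t : b2 t2 = c0 s := by rw [hb2]; simp only []; congr 1; omega
    set X2 := ∑ j ∈ Finset.range (t2 + 1), b2 j * Q ^ j with hX2
    have hident : Q ^ j0 * X2 = ∑ j ∈ Finset.Ico j0 (s + 1), c0 j * Q ^ j := by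
      rw [Finset.sum_Ico_eq_sum_range]
      rw [show s + 1 - j0 = t2 + 1 by omega]
      rw [hX2, Finset.mul_sum]
      refine Finset.sum_congr rfl fun j _ => ?_
      rw [hb2]
      simp only []
      rw [show j0 + j = j + j0 from by omega, pow_add]
      ring
    have hlow : ∀ j ∈ Finset.range j0, w Q' < ν.v (c0 j * Q ^ j) := by
      intro j hj
      have hjlt : j < j0 := Finset.mem_range.1 hj
      refine lt_of_le_of_ne (hmin j (by omega)) fun hv => ?_
      exact absurd (hj0min j (by omega) hv.symm) (by omega)
    have hsplit : Q' = (∑ j ∈ Finset.range j0, c0 j * Q ^ j)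
        + ∑ j ∈ Finset.Ico j0 (s + 1), c0 j * Q ^ j := by
      rw [hQ'sum, Finset.sum_range_add_sum_Ico _ (by omega : j0 ≤ s + 1)]
    have hrest : w Q' < ν.v (Q ^ j0 * X2) := by
      rw [hident]
      have hre : (∑ j ∈ Finset.Ico j0 (s + 1), c0 j * Q ^ j)
          = Q' + -(∑ j ∈ Finset.range j0, c0 j * Q ^ j) := by
        rw [hsplit]; ring
      rw [hre]
      refine lt_of_lt_of_le ?_ (ν.add_ge _ _)
      rw [S13.v_neg]
      refine lt_min hQ'lt ?_
      refine lt_of_lt_of_le ?_ (S13.v_sum_le ν _ _)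
      rw [Finset.lt_inf_iff (lt_top_iff_ne_top.2 hδtop)]
      exact hlow
    have hfact : ν.v (c0 s * Q ^ s) = ν.v (c0 s * Q ^ t2) + ν.v (Q ^ j0) := by
      rw [← ν.map_mul]
      congr 1
      rw [mul_assoc, ← pow_add]
      congr 2
      omega
    have hX2gt : ν.v (c0 s * Q ^ t2) < ν.v X2 := by
      refine S13.add_lt_cancel_right (ν.v (Q ^ j0)) ?_
      calc ν.v (c0 s * Q ^ t2) + ν.v (Q ^ j0) = ν.v (c0 s * Q ^ s) := hfact.symm
      _ = w Q' := hSs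
      _ < ν.v (Q ^ j0 * X2) := hrest
      _ = ν.v X2 + ν.v (Q ^ j0) := by rw [ν.map_mul, add_comm]
    have hX2lt : w X2 < ν.v X2 := by
      refine lt_of_le_of_lt ?_ hX2gt
      rw [hw X2 t2 b2 (fun j _ => hb2deg j) hX2]
      refine le_of_le_of_eq (Finset.inf_le (Finset.mem_range.2 (Nat.lt_succ_self t2))) ?_
      rw [hb2t]
    have hmaster := S13.master ν Q hQmon hd w hw Q' hQ'min b2 t2 hb2deg
      (by rw [hb2t]; exact hAs) (by rw [← hX2]; exact hX2lt)
    rw [hb2t] at hmaster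
    have hmul : t2 * Q.natDegree + Q.natDegree ≤ s * Q.natDegree := by
      have h1 : (t2 + 1) * Q.natDegree ≤ s * Q.natDegree := Nat.mul_le_mul_right _ (by omega)
      rw [add_mul, one_mul] at h1
      exact h1
    omega
  -- Main degree claim : the top coefficient is constant
  have he0 : (c0 s).natDegree = 0 := by
    by_contra hecon
    have he1 : 1 ≤ (c0 s).natDegree := by omega
    obtain ⟨s', rfl⟩ : ∃ t, s = t + 1 := ⟨s - 1, by omega⟩
    have hd' : Q.natDegree < Q'.natDegree := by
      rw [hQ'nat]
      have h1 : 1 * Q.natDegree ≤ (s' + 1) * Q.natDegree := Nat.mul_le_mul_right _ (by omega)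
      omega
    have hsmall : ∀ g : Polynomial K, g ≠ 0 → g.natDegree < Q.natDegree → ν.v g ≠ ⊤ :=
      fun g h1 h2 => S13.small_ne_top ν Q hQmon hd w hw Q' hQ'min hd' hβtop g h1 h2
    set ρ := Q %ₘ (c0 (s' + 1)) with hρdef
    set B := Q /ₘ (c0 (s' + 1)) with hBdef
    have hidQ : ρ + c0 (s' + 1) * B = Q := modByMonic_add_div Q (c0 (s' + 1))
    have hρdeg : ρ.degree < (c0 (s' + 1)).degree := degree_modByMonic_lt Q hAsmon
    have hB0 : B ≠ 0 := by
      intro h0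
      rw [h0, mul_zero, add_zero] at hidQ
      rw [hidQ] at hρdeg
      exact absurd (hρdeg.trans (hc0deg _)) (lt_irrefl _)
    have hBdeg : B.natDegree = Q.natDegree - (c0 (s' + 1)).natDegree :=
      natDegree_divByMonic Q hAsmon
    have hBd : B.natDegree < Q.natDegree := by omega
    have hBt : ν.v B ≠ ⊤ := hsmall B hB0 hBd
    have hBAs : -ρ + Q * 1 = B * c0 (s' + 1) ∧ (-ρ).degree < Q.degree := by
      constructor
      · rw [mul_one, mul_comm B (c0 (s' + 1))]
        linear_combination -hidQ
      · rw [degree_neg]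
        exact hρdeg.trans (hc0deg _)
    obtain ⟨hdiv1, hmod1⟩ := div_modByMonic_unique 1 (-ρ) hQmon hBAs
    have hMtop := S13.lemmaM μ ν hle Q hQmon hQdmn hQlt B (c0 (s' + 1)) hB0 hAs hBd hed hBt hAstop
    rw [hmod1, hdiv1, mul_one] at hMtop
    have hρ0 : ρ ≠ 0 := by
      intro h0
      rw [h0, neg_zero, ν.map_zero] at hMtop
      have hfin : ν.v B + ν.v (c0 (s' + 1)) ≠ ⊤ := by
        lift ν.v B to ℝ using ⟨hBt, ν.ne_bot _⟩ with vB
        lift ν.v (c0 (s' + 1)) to ℝ using ⟨hAstop, ν.ne_bot _⟩ with vA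
        exact_mod_cast EReal.coe_ne_top _
      exact hfin hMtop.1.symm
    set qj : ℕ → Polynomial K := fun j => (B * c0 j) /ₘ Q with hqjdef
    set rj : ℕ → Polynomial K := fun j => (B * c0 j) %ₘ Q with hrjdef
    have hqjz : ∀ j, c0 j = 0 → qj j = 0 ∧ rj j = 0 := by
      intro j h0
      constructor
      · show (B * c0 j) /ₘ Q = 0
        rw [h0, mul_zero, zero_divByMonic]
      · show (B * c0 j) %ₘ Q = 0
        rw [h0, mul_zero, zero_modByMonic]
    have hMj : ∀ j, c0 j ≠ 0 → ν.v (rj j) = ν.v B + ν.v (c0 j) ∧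
        ν.v B + ν.v (c0 j) < ν.v (Q * qj j) := by
      intro j hj
      have hjd : (c0 j).natDegree < Q.natDegree := natDegree_lt_natDegree hj (hc0deg j)
      exact S13.lemmaM μ ν hle Q hQmon hQdmn hQlt B (c0 j) hB0 hj hBd hjd hBt (hsmall _ hj hjd)
    have hrjdeg : ∀ j, (rj j).degree < Q.degree := fun j => degree_modByMonic_lt _ hQmon
    have hqjdeg : ∀ j, (qj j).degree < Q.degree := by
      intro j
      rcases eq_or_ne (qj j) 0 with h0 | h0
      · rw [h0, degree_zero]; exact hQdegbot
      · have hcj : c0 j ≠ 0 := fun hc => h0 (hqjz j hc).1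
        have hnat : (qj j).natDegree < Q.natDegree := by
          show ((B * c0 j) /ₘ Q).natDegree < Q.natDegree
          rw [natDegree_divByMonic _ hQmon, natDegree_mul hB0 hcj]
          have h1 : (c0 j).natDegree < Q.natDegree := natDegree_lt_natDegree hcj (hc0deg j)
          omega
        rw [degree_eq_natDegree h0, degree_eq_natDegree hQ0]
        exact_mod_cast hnat
    set b3 : ℕ → Polynomial K := fun j =>
      if j = s' + 1 then -ρ else if j = 0 then rj 0 else rj j + qj (j - 1) with hb3
    have hb3deg : ∀ j, (b3 j).degree < Q.degree := by
      intro j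
      rw [hb3]
      by_cases h1 : j = s' + 1
      · simp only [h1, if_true]
        rw [degree_neg]
        exact hρdeg.trans (hc0deg _)
      · by_cases h2 : j = 0
        · simp only [h1, h2, if_false, if_true]
          exact hrjdeg 0
        · simp only [h1, h2, if_false]
          exact lt_of_le_of_lt (degree_add_le _ _) (max_lt (hrjdeg j) (hqjdeg (j - 1)))
    have hb3s : b3 (s' + 1) = -ρ := by rw [hb3]; simp
    have hb3s0 : b3 (s' + 1) ≠ 0 := by rw [hb3s]; simpa using hρ0
    set X3 := ∑ j ∈ Finset.range (s' + 1 + 1), b3 j * Q ^ j with hX3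
    have hterm : ∀ j, (B * c0 j) * Q ^ j = rj j * Q ^ j + qj j * Q ^ (j + 1) := by
      intro j
      show (B * c0 j) * Q ^ j
          = ((B * c0 j) %ₘ Q) * Q ^ j + ((B * c0 j) /ₘ Q) * Q ^ (j + 1)
      conv_lhs => rw [← modByMonic_add_div (B * c0 j) Q]
      ring
    have hcs : B * c0 (s' + 1) = Q - ρ := by
      rw [mul_comm]
      linear_combination hidQ
    have hEqA : B * Q' = (∑ j ∈ Finset.range (s' + 1), rj j * Q ^ j)
        + ((∑ j ∈ Finset.range s', qj j * Q ^ (j + 1)) + qj s' * Q ^ (s' + 1))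
        + (Q ^ (s' + 2) - ρ * Q ^ (s' + 1)) := by
      rw [hQ'sum, Finset.mul_sum, Finset.sum_range_succ]
      have h1 : ∀ j ∈ Finset.range (s' + 1), B * (c0 j * Q ^ j)
          = rj j * Q ^ j + qj j * Q ^ (j + 1) := by
        intro j _
        rw [← hterm j]
        ring
      rw [Finset.sum_congr rfl h1, Finset.sum_add_distrib]
      have h2 : B * (c0 (s' + 1) * Q ^ (s' + 1)) = Q ^ (s' + 2) - ρ * Q ^ (s' + 1) := by
        have h3 : B * (c0 (s' + 1) * Q ^ (s' + 1)) = (B * c0 (s' + 1)) * Q ^ (s' + 1) := by ring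
        rw [h3, hcs]
        ring
      rw [h2, Finset.sum_range_succ (fun j => qj j * Q ^ (j + 1)) s']
    have hEqB : X3 = (∑ j ∈ Finset.range (s' + 1), rj j * Q ^ j)
        + (∑ j ∈ Finset.range s', qj j * Q ^ (j + 1)) - ρ * Q ^ (s' + 1) := by
      rw [hX3, Finset.sum_range_succ, hb3s]
      rw [Finset.sum_range_succ' (fun j => b3 j * Q ^ j) s']
      have h0 : b3 0 * Q ^ 0 = rj 0 * Q ^ 0 := by
        rw [hb3]
        simp
      have h2 : ∀ j ∈ Finset.range s', b3 (j + 1) * Q ^ (j + 1)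
          = rj (j + 1) * Q ^ (j + 1) + qj j * Q ^ (j + 1) := by
        intro j hj
        have hjs : j + 1 ≠ s' + 1 := by
          have := Finset.mem_range.1 hj
          omega
        rw [hb3]
        simp only [hjs, if_false, Nat.succ_ne_zero, Nat.add_sub_cancel]
        ring
      rw [Finset.sum_congr rfl h2, Finset.sum_add_distrib, h0]
      rw [Finset.sum_range_succ' (fun j => rj j * Q ^ j) s']
      ring
    have hXid : X3 = B * Q' - Q ^ (s' + 2) - qj s' * Q ^ (s' + 1) := by
      rw [hEqA, hEqB]
      ring
    have hm0top : ν.v B + w Q' ≠ ⊤ := by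
      lift ν.v B to ℝ using ⟨hBt, ν.ne_bot _⟩ with vB
      lift w Q' to ℝ using ⟨hδtop, hδbot⟩ with vQ
      exact_mod_cast EReal.coe_ne_top _
    have hm0lt : ν.v B + w Q' < ν.v X3 := by
      rw [hXid]
      have hc1 : ν.v B + w Q' < ν.v (B * Q') := by
        rw [ν.map_mul]
        exact S13.add_lt_left _ hBt (ν.ne_bot _) hQ'lt
      have hc2 : ν.v B + w Q' < ν.v (Q ^ (s' + 2)) := by
        have e1 : ν.v (Q ^ (s' + 2)) = ν.v Q + ν.v (Q ^ (s' + 1)) := by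
          rw [pow_succ' Q (s' + 1), ν.map_mul]
        have e2 : ν.v B + w Q' = (ν.v B + ν.v (c0 (s' + 1))) + ν.v (Q ^ (s' + 1)) := by
          rw [← hSs, ν.map_mul, ← add_assoc]
        rw [e1, e2]
        exact S13.add_lt_right _ (hQpow_top _) (ν.ne_bot _) hMtop.2
      have hc3 : ν.v B + w Q' < ν.v (qj s' * Q ^ (s' + 1)) := by
        rcases eq_or_ne (qj s') 0 with h0 | h0
        · rw [h0, zero_mul, ν.map_zero]
          exact lt_top_iff_ne_top.2 hm0top
        · have hc0s' : c0 s' ≠ 0 := fun hcz => h0 (hqjz s' hcz).1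
          have e1 : ν.v (qj s' * Q ^ (s' + 1)) = ν.v (Q * qj s') + ν.v (Q ^ s') := by
            rw [← ν.map_mul]
            congr 1
            rw [pow_succ' Q s']
            ring
          calc ν.v B + w Q' ≤ ν.v B + ν.v (c0 s' * Q ^ s') :=
                add_le_add_right (hmin s' (by omega)) _
          _ = (ν.v B + ν.v (c0 s')) + ν.v (Q ^ s') := by rw [ν.map_mul, ← add_assoc]
          _ < ν.v (Q * qj s') + ν.v (Q ^ s') :=
                S13.add_lt_right _ (hQpow_top s') (ν.ne_bot _) (hMj s' hc0s').2
          _ = ν.v (qj s' * Q ^ (s' + 1)) := e1.symm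
      have hX3e : B * Q' - Q ^ (s' + 2) - qj s' * Q ^ (s' + 1)
          = (B * Q' + -(Q ^ (s' + 2))) + -(qj s' * Q ^ (s' + 1)) := by ring
      rw [hX3e]
      refine lt_of_lt_of_le ?_ (ν.add_ge _ _)
      rw [S13.v_neg]
      refine lt_min ?_ hc3
      refine lt_of_lt_of_le ?_ (ν.add_ge _ _)
      rw [S13.v_neg]
      exact lt_min hc1 hc2
    have hwX3 : w X3 ≤ ν.v B + w Q' := by
      rw [hw X3 (s' + 1) b3 (fun j _ => hb3deg j) hX3]
      refine le_trans (Finset.inf_le (Finset.mem_range.2 (Nat.lt_succ_self (s' + 1)))) ?_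
      rw [hb3s]
      have e3 : ν.v (-ρ * Q ^ (s' + 1)) = (ν.v B + ν.v (c0 (s' + 1))) + ν.v (Q ^ (s' + 1)) := by
        rw [ν.map_mul, hMtop.1]
      rw [e3, add_assoc, ← ν.map_mul, hSs]
    have hmaster := S13.master ν Q hQmon hd w hw Q' hQ'min b3 (s' + 1) hb3deg hb3s0
      (by rw [← hX3]; exact lt_of_le_of_lt hwX3 hm0lt)
    rw [hb3s] at hmaster
    have hρnat : (-ρ).natDegree < (c0 (s' + 1)).natDegree := by
      rw [natDegree_neg]
      exact natDegree_lt_natDegree hρ0 hρdeg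
    omega
  -- assemble the conclusion
  have hAs1 : c0 s = 1 := hAsmon.natDegree_eq_zero.1 he0
  refine ⟨s, fun j => if j < s then c0 j else 0, ?_, ?_, ?_, ?_⟩
  · intro j hj
    by_cases h : j < s
    · simpa [h] using hc0deg j
    · simpa [h] using hQdegbot
  · conv_lhs => rw [hQ'sum]
    rw [Finset.sum_range_succ, hAs1, one_mul, add_comm]
    congr 1
    refine Finset.sum_congr rfl fun j hj => ?_
    simp only []
    rw [if_pos (Finset.mem_range.1 hj)]
  · rw [← hSs, hAs1, one_mul]
    exact S13.v_pow ν Q s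
  · simp only []
    have hif : (if 0 < s then c0 0 else 0) = c0 0 := if_pos (by omega)
    rw [hif, ← hS0, pow_zero, mul_one]

/-- Let `μ < ν` be valuations on `K[y]` with the strictly positive
values of `μ` well-ordered, `Q ∈ Φ_μ(ν)` with `ν(Q) = β_μ(ν)`, and `ν_Q` the
truncation of `ν` with respect to `Q`.  If `Q'` is a monic polynomial of minimal
degree among monic `P` with `ν_Q(P) < ν(P)`, then the `Q`-expansion of `Q'` has the
form `Q' = Q^s + a_{s-1} Q^{s-1} + ⋯ + a_0` (top `Q`-coefficient 1), and
`ν_Q(Q') = s·β_μ(ν) = ν(a_0)`. -/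
theorem form_of_next_key_polynomial
    (μ ν : PolyValuation K)
    (hle : ∀ f : Polynomial K, μ.v f ≤ ν.v f) (hne : μ.v ≠ ν.v)
    (hwf : PosValuesWF μ)
    (Q : Polynomial K) (hQ : Q ∈ Phi μ ν) (hQval : ν.v Q = betaMN μ ν)
    (w : Polynomial K → EReal) (hw : IsTruncation ν Q w)
    (Q' : Polynomial K) (hQ'monic : Q'.Monic) (hQ'lt : w Q' < ν.v Q')
    (hQ'min : ∀ P : Polynomial K, P.Monic → w P < ν.v P →
      Q'.natDegree ≤ P.natDegree) :
    ∃ (s : ℕ) (a : ℕ → Polynomial K),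
      (∀ j ≤ s, (a j).degree < Q.degree) ∧
      Q' = Q ^ s + ∑ j ∈ Finset.range s, a j * Q ^ j ∧
      w Q' = s • betaMN μ ν ∧ w Q' = ν.v (a 0) := by
  obtain ⟨hQmon, hQdmn, hQlt⟩ := hQ
  obtain ⟨s, a, h1, h2, h3, h4⟩ := form_of_next_key_polynomial_aux μ ν hle Q hQmon hQdmn hQlt
    w hw Q' hQ'monic hQ'lt hQ'min
  exact ⟨s, a, h1, h2, by rw [← hQval]; exact h3, h4⟩
end

section
/- Let K be a field and let μ < ν be valuations on K[y] such that the set of strictly positive values taken by μ is well-ordered. Let Q ∈ Φ_μ(ν) with ν(Q) = β_μ(ν) and let ν_Q be the truncation of ν with respect to Q. If Q' ∈ K[y] is monic with deg Q' = d_μ(ν) and ν(Q') > ν_Q(Q'), then ν_Q(Q') = β_μ(ν). -/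
open Polynomial

variable {K : Type*} [Field K]

lemma ereal_self_add_self_eq_zero {x : EReal} (hb : x ≠ ⊥) (h : x + x = 0) : x = 0 := by
  induction x using EReal.rec with
  | bot => simp at hb
  | coe r =>
    norm_cast at h ⊢
    linarith
  | top => simp at h

/-- Let `μ < ν` be valuations on `K[y]` with the strictly positive
values of `μ` well-ordered, `Q ∈ Φ_μ(ν)` with `ν(Q) = β_μ(ν)`, and `ν_Q` the
truncation of `ν` with respect to `Q`.  If `Q'` is monic with `deg Q' = d_μ(ν)` and
`ν(Q') > ν_Q(Q')`, then `ν_Q(Q') = β_μ(ν)`. -/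
theorem truncation_value_of_same_degree
    (μ ν : PolyValuation K)
    (hle : ∀ f : Polynomial K, μ.v f ≤ ν.v f) (hne : μ.v ≠ ν.v)
    (hwf : PosValuesWF μ)
    (Q : Polynomial K) (hQ : Q ∈ Phi μ ν) (hQval : ν.v Q = betaMN μ ν)
    (w : Polynomial K → EReal) (hw : IsTruncation ν Q w)
    (Q' : Polynomial K) (hQ'monic : Q'.Monic) (hQ'deg : Q'.natDegree = dmn μ ν)
    (hQ'lt : w Q' < ν.v Q') :
    w Q' = betaMN μ ν := by
  classical
  obtain ⟨hQm, hQd, hQmu⟩ := hQ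
  -- `dmn μ ν ≥ 1`
  have hd1 : 1 ≤ dmn μ ν := by
    by_contra h
    push_neg at h
    have hd0 : Q.natDegree = 0 := by omega
    have hQ1 : Q = 1 := hQm.natDegree_eq_zero.mp hd0
    rw [hQ1, ν.map_one, μ.map_one] at hQmu
    exact lt_irrefl _ hQmu
  -- degrees
  have hQne : Q ≠ 0 := hQm.ne_zero
  have hdegQ : Q.degree = (dmn μ ν : ℕ) := by
    rw [Polynomial.degree_eq_natDegree hQne, hQd]
  have hdeg : Q'.degree = Q.degree := by
    rw [Polynomial.degree_eq_natDegree hQ'monic.ne_zero,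
      Polynomial.degree_eq_natDegree hQne, hQ'deg, hQd]
  have hsub : (Q' - Q).degree < Q.degree := by
    have := Polynomial.degree_sub_lt hdeg hQ'monic.ne_zero
      (hQ'monic.leadingCoeff.trans hQm.leadingCoeff.symm)
    rwa [hdeg] at this
  have hone : (1 : Polynomial K).degree < Q.degree := by
    rw [Polynomial.degree_one, hdegQ]
    exact_mod_cast hd1
  -- the Q-expansion of Q'
  set c : ℕ → Polynomial K := fun j => if j = 0 then Q' - Q else 1 with hc
  have hdegc : ∀ j ≤ 1, (c j).degree < Q.degree := by
    intro j hj
    rcases Nat.le_one_iff_eq_zero_or_eq_one.mp hj with rfl | rfl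
    · simpa [hc] using hsub
    · simpa [hc] using hone
  have hexp : Q' = ∑ j ∈ Finset.range 2, c j * Q ^ j := by
    rw [Finset.sum_range_succ, Finset.sum_range_one]
    simp [hc]
  have hwQ' : w Q' = min (ν.v (Q' - Q)) (ν.v Q) := by
    rw [hw Q' 1 c hdegc hexp]
    have : Finset.range 2 = ({0, 1} : Finset ℕ) := by decide
    rw [this, Finset.inf_insert, Finset.inf_singleton]
    simp [hc]
  -- ν(-Q) = ν(Q)
  have hneg1 : ν.v (-1) = 0 := by
    apply ereal_self_add_self_eq_zero (ν.ne_bot _)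
    rw [← ν.map_mul]
    norm_num [ν.map_one]
  have hnegQ : ν.v (-Q) = ν.v Q := by
    have : (-Q : Polynomial K) = -1 * Q := by ring
    rw [this, ν.map_mul, hneg1, zero_add]
  -- ν(Q) ≤ ν(Q' - Q)
  have hge : ν.v Q ≤ ν.v (Q' - Q) := by
    by_contra hlt
    push_neg at hlt
    have h1 : w Q' = ν.v (Q' - Q) := by rw [hwQ', min_eq_left hlt.le]
    have h2 : ν.v (Q' - Q) < ν.v Q' := h1 ▸ hQ'lt
    have h3 : min (ν.v Q') (ν.v (-Q)) ≤ ν.v (Q' - Q) := by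
      have := ν.add_ge Q' (-Q)
      rwa [← sub_eq_add_neg] at this
    rw [hnegQ] at h3
    exact absurd h3 (not_le.mpr (lt_min h2 hlt))
  rw [hwQ', min_eq_right hge, hQval]
end

section
/- Let K be a field, let μ and ν be valuations on K[y] with μ(f) ≤ ν(f) for all f ∈ K[y] and μ ≠ ν, and let {Q_i}_{i∈I} be a complete set of key polynomials for ν. Then there exists i ∈ I such that μ(Q_i) < ν(Q_i). -/
open Polynomial

variable {K : Type*} [Field K]

/-- `{Q_i}_{i ∈ I}` is a complete set of key polynomials for `ν`: each `Q i` is a key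
polynomial and, for every `β` in the image of `ν`, the additive group
`{f : ν(f) ≥ β}` is generated by the products `C a · Q_{i₁}^{γ₁} ⋯ Q_{i_s}^{γ_s}`
with `ν(C a) + Σ_j γ_j · ν(Q_{i_j}) ≥ β`. -/
def IsCompleteKPSet (ν : PolyValuation K) {I : Type*} (Q : I → Polynomial K) : Prop :=
  (∀ i : I, IsKeyPoly ν (Q i)) ∧
  ∀ β ∈ Set.range ν.v, ∀ f : Polynomial K,
    (β ≤ ν.v f ↔ f ∈ AddSubgroup.closure
      {g : Polynomial K | ∃ (a : K) (s : ℕ) (ι : Fin s → I) (γ : Fin s → ℕ),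
        g = Polynomial.C a * ∏ j, Q (ι j) ^ γ j ∧
        β ≤ ν.v (Polynomial.C a) + ∑ j, γ j • ν.v (Q (ι j))})

lemma ereal_finite_of_add_eq_zero {x y : EReal} (h : x + y = 0) (hx : x ≠ ⊥)
    (hy : y ≠ ⊥) : x ≠ ⊤ ∧ y ≠ ⊤ := by
  constructor
  · rintro rfl
    rw [EReal.top_add_of_ne_bot hy] at h
    exact absurd h (by simp)
  · rintro rfl
    rw [EReal.add_top_of_ne_bot hx] at h
    exact absurd h (by simp)

lemma PolyValuation.const_eq (μ ν : PolyValuation K)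
    (hle : ∀ f : Polynomial K, μ.v f ≤ ν.v f) (a : K) :
    μ.v (Polynomial.C a) = ν.v (Polynomial.C a) := by
  rcases eq_or_ne a 0 with rfl | ha
  · rw [Polynomial.C_0, μ.map_zero, ν.map_zero]
  · have h1 : μ.v (Polynomial.C a) + μ.v (Polynomial.C a⁻¹) = 0 := by
      rw [← μ.map_mul, ← Polynomial.C_mul, mul_inv_cancel₀ ha, Polynomial.C_1, μ.map_one]
    have h2 : ν.v (Polynomial.C a) + ν.v (Polynomial.C a⁻¹) = 0 := by
      rw [← ν.map_mul, ← Polynomial.C_mul, mul_inv_cancel₀ ha, Polynomial.C_1, ν.map_one]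
    obtain ⟨hx1, hy1⟩ := ereal_finite_of_add_eq_zero h1 (μ.ne_bot _) (μ.ne_bot _)
    obtain ⟨hx2, hy2⟩ := ereal_finite_of_add_eq_zero h2 (ν.ne_bot _) (ν.ne_bot _)
    have e1 : μ.v (Polynomial.C a) = ((μ.v (Polynomial.C a)).toReal : EReal) :=
      (EReal.coe_toReal hx1 (μ.ne_bot _)).symm
    have e2 : μ.v (Polynomial.C a⁻¹) = ((μ.v (Polynomial.C a⁻¹)).toReal : EReal) :=
      (EReal.coe_toReal hy1 (μ.ne_bot _)).symm
    have e3 : ν.v (Polynomial.C a) = ((ν.v (Polynomial.C a)).toReal : EReal) :=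
      (EReal.coe_toReal hx2 (ν.ne_bot _)).symm
    have e4 : ν.v (Polynomial.C a⁻¹) = ((ν.v (Polynomial.C a⁻¹)).toReal : EReal) :=
      (EReal.coe_toReal hy2 (ν.ne_bot _)).symm
    set r := (μ.v (Polynomial.C a)).toReal
    set r' := (μ.v (Polynomial.C a⁻¹)).toReal
    set s := (ν.v (Polynomial.C a)).toReal
    set s' := (ν.v (Polynomial.C a⁻¹)).toReal
    rw [e1, e2] at h1; rw [e3, e4] at h2
    have hrr' : r + r' = 0 := by exact_mod_cast h1
    have hss' : s + s' = 0 := by exact_mod_cast h2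
    have hle1 : r ≤ s := by
      have := hle (Polynomial.C a); rw [e1, e3] at this; exact_mod_cast this
    have hle2 : r' ≤ s' := by
      have := hle (Polynomial.C a⁻¹); rw [e2, e4] at this; exact_mod_cast this
    rw [e1, e3]
    norm_cast
    linarith

lemma PolyValuation.neg_one (μ : PolyValuation K) : μ.v (-1) = 0 := by
  have h : μ.v (-1) + μ.v (-1) = 0 := by
    rw [← μ.map_mul]; norm_num; exact μ.map_one
  have hb := μ.ne_bot (-1 : Polynomial K)
  obtain ⟨ht, -⟩ := ereal_finite_of_add_eq_zero h hb hb
  have e : μ.v (-1) = ((μ.v (-1)).toReal : EReal) := (EReal.coe_toReal ht hb).symm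
  rw [e] at h
  have h' : (μ.v (-1)).toReal + (μ.v (-1)).toReal = 0 := by exact_mod_cast h
  have h0 : (μ.v (-1)).toReal = 0 := by linarith
  rw [e, h0, EReal.coe_zero]

lemma PolyValuation.map_neg (μ : PolyValuation K) (f : Polynomial K) :
    μ.v (-f) = μ.v f := by
  have : (-f : Polynomial K) = -1 * f := by ring
  rw [this, μ.map_mul, μ.neg_one, zero_add]

lemma PolyValuation.map_pow (μ : PolyValuation K) (f : Polynomial K) (n : ℕ) :
    μ.v (f ^ n) = n • μ.v f := by
  induction n with
  | zero => simpa using μ.map_one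
  | succ n ih => rw [pow_succ, μ.map_mul, ih, succ_nsmul]

/-- Let `μ ≤ ν` be distinct valuations on `K[y]` and `{Q_i}_{i∈I}`
a complete set of key polynomials for `ν`.  Then there exists `i ∈ I` with
`μ(Q_i) < ν(Q_i)`. -/
theorem exists_key_polynomial_with_smaller_value
    (μ ν : PolyValuation K)
    (hle : ∀ f : Polynomial K, μ.v f ≤ ν.v f) (hne : μ.v ≠ ν.v)
    (I : Type*) [LinearOrder I] [WellFoundedLT I]
    (Q : I → Polynomial K) (hQ : IsCompleteKPSet ν Q) :
    ∃ i : I, μ.v (Q i) < ν.v (Q i) := by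
  by_contra hcon
  push_neg at hcon
  have hQeq : ∀ i, μ.v (Q i) = ν.v (Q i) := fun i => le_antisymm (hle _) (hcon i)
  -- find f with μ f < ν f
  obtain ⟨f, hf⟩ : ∃ f, μ.v f < ν.v f := by
    by_contra h
    push_neg at h
    exact hne (funext fun f => le_antisymm (hle f) (h f))
  set β := ν.v f with hβ
  have hmem : f ∈ AddSubgroup.closure
      {g : Polynomial K | ∃ (a : K) (s : ℕ) (ι : Fin s → I) (γ : Fin s → ℕ),
        g = Polynomial.C a * ∏ j, Q (ι j) ^ γ j ∧
        β ≤ ν.v (Polynomial.C a) + ∑ j, γ j • ν.v (Q (ι j))} :=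
    (hQ.2 β ⟨f, rfl⟩ f).mp le_rfl
  -- the subgroup of polynomials with μ-value ≥ β
  let H : AddSubgroup (Polynomial K) :=
    { carrier := {g | β ≤ μ.v g}
      add_mem' := fun {p q} hp hq => le_trans (le_min hp hq) (μ.add_ge p q)
      zero_mem' := by simp only [Set.mem_setOf_eq, μ.map_zero]; exact le_top
      neg_mem' := fun {p} hp => by simpa [μ.map_neg] using hp }
  have hsub : {g : Polynomial K | ∃ (a : K) (s : ℕ) (ι : Fin s → I) (γ : Fin s → ℕ),
        g = Polynomial.C a * ∏ j, Q (ι j) ^ γ j ∧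
        β ≤ ν.v (Polynomial.C a) + ∑ j, γ j • ν.v (Q (ι j))} ⊆ H := by
    rintro g ⟨a, s, ι, γ, rfl, hβle⟩
    show β ≤ μ.v _
    have hprod : μ.v (∏ j, Q (ι j) ^ γ j) = ν.v (∏ j, Q (ι j) ^ γ j) := by
      refine Finset.prod_induction _ (fun p => μ.v p = ν.v p)
        (fun p q hp hq => by
          show μ.v (p * q) = ν.v (p * q)
          rw [μ.map_mul, ν.map_mul, hp, hq])
        (by show μ.v 1 = ν.v 1; rw [μ.map_one, ν.map_one]) (fun j _ => ?_)
      show μ.v (Q (ι j) ^ γ j) = ν.v (Q (ι j) ^ γ j)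
      rw [μ.map_pow, ν.map_pow, hQeq]
    have hνprod : ν.v (∏ j, Q (ι j) ^ γ j) = ∑ j, γ j • ν.v (Q (ι j)) := by
      induction (Finset.univ : Finset (Fin s)) using Finset.induction with
      | empty => simpa using ν.map_one
      | insert _ _ hx ih =>
        rw [Finset.prod_insert hx, Finset.sum_insert hx, ν.map_mul, ν.map_pow, ih]
    rw [μ.map_mul, hprod, μ.const_eq ν hle, hνprod]
    exact hβle
  have : f ∈ H := (AddSubgroup.closure_le H).mpr hsub hmem
  exact absurd hf (not_lt.mpr this)
end

section
/- Let K be a field and let μ, ν be valuations on K[y] such that μ(f) ≤ ν(f) for all f ∈ K[y], μ(c) = ν(c) for all c ∈ K, and μ(y) < ν(y). Then μ is the monomial valuation determined by its values on K and on y: for every f = Σ_j a_j y^j ∈ K[y] with a_j ∈ K, one has μ(f) = min_j (μ(a_j) + j·μ(y)). -/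
open Polynomial

variable {K : Type*} [Field K]

namespace PolyValuationAux

lemma min_add (a b c : EReal) : a + min b c = min (a + b) (a + c) := by
  rcases le_total b c with h | h
  · rw [min_eq_left h, min_eq_left (add_le_add_right h a)]
  · rw [min_eq_right h, min_eq_right (add_le_add_right h a)]

lemma add_inf {a : EReal} (ha : a ≠ ⊥) (s : Finset ℕ) (F : ℕ → EReal) :
    a + s.inf F = s.inf fun j => a + F j := by
  induction s using Finset.cons_induction with
  | empty => simpa using EReal.add_top_of_ne_bot ha
  | cons x s hx ih => rw [Finset.inf_cons, Finset.inf_cons, min_add, ih]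

lemma inf_range_succ (F : ℕ → EReal) (n : ℕ) :
    Finset.inf (Finset.range (n + 1)) F
      = min (F 0) (Finset.inf (Finset.range n) (fun j => F (j + 1))) := by
  induction n with
  | zero => simp
  | succ n ih =>
    rw [Finset.range_add_one, Finset.inf_insert, ih, Finset.range_add_one, Finset.inf_insert]
    exact inf_left_comm _ _ _

lemma nsmul_ne_bot_ne_top {x : EReal} (hb : x ≠ ⊥) (ht : x ≠ ⊤) (j : ℕ) :
    j • x ≠ ⊥ ∧ j • x ≠ ⊤ := by
  induction j with
  | zero => simp
  | succ j ih =>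
    rw [succ_nsmul]
    obtain ⟨r, hr⟩ : ∃ r : ℝ, j • x = r := ⟨(j • x).toReal, (EReal.coe_toReal ih.2 ih.1).symm⟩
    obtain ⟨s, hs⟩ : ∃ s : ℝ, x = s := ⟨x.toReal, (EReal.coe_toReal ht hb).symm⟩
    rw [hr, hs, ← EReal.coe_add]
    exact ⟨EReal.coe_ne_bot _, EReal.coe_ne_top _⟩

lemma self_add_self_eq_zero {x : EReal} (hb : x ≠ ⊥) (h : x + x = 0) : x = 0 := by
  rcases eq_or_ne x ⊤ with ht | ht
  · rw [ht, EReal.top_add_of_ne_bot (by simp : (⊤ : EReal) ≠ ⊥)] at h; exact absurd h (by simp)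
  · obtain ⟨r, hr⟩ : ∃ r : ℝ, x = r := ⟨x.toReal, (EReal.coe_toReal ht hb).symm⟩
    rw [hr] at h ⊢
    rw [← EReal.coe_add] at h
    have : r + r = 0 := by exact_mod_cast h
    have : r = 0 := by linarith
    exact_mod_cast this

lemma v_neg (μ : PolyValuation K) (f : Polynomial K) : μ.v (-f) = μ.v f := by
  have h1 : μ.v (-1 : Polynomial K) + μ.v (-1 : Polynomial K) = 0 := by
    rw [← μ.map_mul]; simpa using μ.map_one
  have h0 : μ.v (-1 : Polynomial K) = 0 := self_add_self_eq_zero (μ.ne_bot _) h1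
  calc μ.v (-f) = μ.v (-1 * f) := by ring_nf
    _ = μ.v (-1 : Polynomial K) + μ.v f := μ.map_mul _ _
    _ = μ.v f := by rw [h0, zero_add]

lemma v_C_ne_top (μ : PolyValuation K) {a : K} (ha : a ≠ 0) : μ.v (C a) ≠ ⊤ := by
  intro ht
  have h1 : μ.v (C a) + μ.v (C a⁻¹) = 0 := by
    rw [← μ.map_mul, ← C_mul, mul_inv_cancel₀ ha, C_1]; exact μ.map_one
  rw [ht, EReal.top_add_of_ne_bot (μ.ne_bot _)] at h1
  exact absurd h1 (by simp)

lemma main (μ ν : PolyValuation K)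
    (hle : ∀ f : Polynomial K, μ.v f ≤ ν.v f)
    (hK : ∀ c : K, μ.v (Polynomial.C c) = ν.v (Polynomial.C c))
    (hy : μ.v Polynomial.X < ν.v Polynomial.X) :
    ∀ (n : ℕ) (f : Polynomial K), f.natDegree ≤ n →
      μ.v f = Finset.inf (Finset.range (n + 1))
        (fun j => μ.v (Polynomial.C (f.coeff j)) + j • μ.v Polynomial.X) := by
  have hXb := μ.ne_bot X
  have hXt : μ.v X ≠ ⊤ := hy.ne_top
  intro n
  induction n with
  | zero =>
    intro f hf
    obtain hfc := Polynomial.eq_C_of_natDegree_le_zero hf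
    rw [hfc]
    simp [coeff_C]
  | succ n ih =>
    intro f hf
    by_cases hdeg : f.natDegree ≤ n
    · rw [ih f hdeg]
      conv_rhs => rw [Finset.range_add_one, Finset.inf_insert]
      have hc : f.coeff (n + 1) = 0 :=
        coeff_eq_zero_of_natDegree_lt (lt_of_le_of_lt hdeg (Nat.lt_succ_self n))
      have hterm : μ.v (C (f.coeff (n + 1))) + (n + 1) • μ.v X = ⊤ := by
        rw [hc, C_0, μ.map_zero]
        exact EReal.top_add_of_ne_bot (nsmul_ne_bot_ne_top hXb hXt (n + 1)).1
      rw [hterm, top_inf_eq]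
    · set g := f.divX with hg
      set a0 := f.coeff 0 with ha0
      have hfe : X * g + C a0 = f := X_mul_divX_add f
      have hgdeg : g.natDegree ≤ n := by
        rw [hg, natDegree_divX_eq_natDegree_tsub_one]
        omega
      have hIH := ih g hgdeg
      have hco : ∀ j : ℕ, g.coeff j = f.coeff (j + 1) := fun j => coeff_divX
      set A := μ.v (C a0) with hA
      set B := μ.v X + μ.v g with hB
      have hRHS : Finset.inf (Finset.range (n + 1 + 1))
          (fun j => μ.v (C (f.coeff j)) + j • μ.v X) = min A B := by
        rw [inf_range_succ]
        congr 1
        · simp [hA, ha0]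
        · have hterm : ∀ j : ℕ, μ.v (C (f.coeff (j + 1))) + (j + 1) • μ.v X
              = μ.v X + (μ.v (C (g.coeff j)) + j • μ.v X) := by
            intro j
            rw [hco j, succ_nsmul]
            abel
          calc Finset.inf (Finset.range (n + 1))
                (fun j => μ.v (C (f.coeff (j + 1))) + (j + 1) • μ.v X)
              = Finset.inf (Finset.range (n + 1))
                (fun j => μ.v X + (μ.v (C (g.coeff j)) + j • μ.v X)) := by
                exact Finset.inf_congr rfl (fun j _ => hterm j)
            _ = μ.v X + Finset.inf (Finset.range (n + 1))
                (fun j => μ.v (C (g.coeff j)) + j • μ.v X) :=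
                (add_inf hXb _ _).symm
            _ = B := by rw [← hIH]
      rw [hRHS]
      have hXg : μ.v (X * g) = B := μ.map_mul X g
      have hge : min A B ≤ μ.v f := by
        have h := μ.add_ge (X * g) (C a0)
        rw [hfe, hXg] at h
        exact le_trans (le_of_eq (min_comm A B)) h
      have hdiff1 : f + -(X * g) = C a0 := by rw [← hfe]; ring
      have hdiff2 : f + -(C a0) = X * g := by rw [← hfe]; ring
      rcases lt_trichotomy A B with hAB | hAB | hAB
      · -- A < B : show μ f ≤ A
        have h := μ.add_ge f (-(X * g))
        rw [hdiff1, v_neg, hXg] at h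
        rcases min_le_iff.1 h with h' | h'
        · rw [min_eq_left hAB.le] at hge ⊢; exact le_antisymm h' hge
        · exact absurd h' (not_le.2 hAB)
      · -- A = B
        rcases eq_or_ne A ⊤ with htop | htop
        · have : min A B = ⊤ := by rw [← hAB, min_self, htop]
          rw [this] at hge ⊢
          exact le_antisymm le_top hge
        · by_contra hne
          have hAle : A ≤ μ.v f := by rw [← hAB, min_self] at hge; exact hge
          have hlt : A < μ.v f :=
            lt_of_le_of_ne hAle (fun h => hne (by rw [← hAB, min_self, ← h]))
          have hgb := μ.ne_bot g
          have hgt : μ.v g ≠ ⊤ := by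
            intro h
            apply htop
            rw [hAB, hB, h, EReal.add_top_of_ne_bot hXb]
          obtain ⟨r, hr⟩ : ∃ r : ℝ, μ.v g = r := ⟨(μ.v g).toReal, (EReal.coe_toReal hgt hgb).symm⟩
          have h2 : B < ν.v (X * g) := by
            rw [ν.map_mul]
            calc B = μ.v X + μ.v g := hB
              _ < ν.v X + μ.v g := by
                  rw [hr, add_comm (μ.v X), add_comm (ν.v X)]
                  exact EReal.add_lt_add_left_coe hy r
              _ ≤ ν.v X + ν.v g := add_le_add_right (hle g) _
          have h3 : min (ν.v f) (ν.v (X * g)) ≤ ν.v (C a0) := by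
            have h := ν.add_ge f (-(X * g))
            rw [v_neg, hdiff1] at h
            exact h
          have h4 : A < ν.v f := lt_of_lt_of_le hlt (hle f)
          have h5 : A < ν.v (C a0) := lt_of_lt_of_le (lt_min h4 (hAB ▸ h2)) h3
          rw [← hK a0] at h5
          exact lt_irrefl A h5
      · -- B < A : show μ f ≤ B
        have h := μ.add_ge f (-(C a0))
        rw [hdiff2, v_neg, hXg] at h
        rcases min_le_iff.1 h with h' | h'
        · rw [min_eq_right hAB.le] at hge ⊢; exact le_antisymm h' hge
        · exact absurd h' (not_le.2 hAB)

end PolyValuationAux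

/-- Let `μ ≤ ν` be valuations on `K[y]` which agree on constants
and satisfy `μ(y) < ν(y)`.  Then `μ` is the monomial valuation determined by its
values on `K` and on `y`: for every `f = Σ_j a_j y^j`,
`μ(f) = min_j (μ(a_j) + j·μ(y))`. -/
theorem smaller_valuation_is_monomial
    (μ ν : PolyValuation K)
    (hle : ∀ f : Polynomial K, μ.v f ≤ ν.v f)
    (hK : ∀ c : K, μ.v (Polynomial.C c) = ν.v (Polynomial.C c))
    (hy : μ.v Polynomial.X < ν.v Polynomial.X) :
    ∀ f : Polynomial K,
      μ.v f = Finset.inf (Finset.range (f.natDegree + 1))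
        (fun j => μ.v (Polynomial.C (f.coeff j)) + j • μ.v Polynomial.X) := by
  intro f
  exact PolyValuationAux.main μ ν hle hK hy f.natDegree f le_rfl
end
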